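/- arXiv:1512.05634 — 4 statements merged into one kernel-verified Lean document; each statement's English description precedes it below -/
import Mathlib

section
/- Let α ∈ (1,2) and f ∈ L²(0,1). The function u(x) = −(₀I_x^α f)(x) + (₀I_x^α f)(1) · x^{α−1} satisfies u(0) = 0, u(1) = 0, and ᴿD₀^α u = −f in the distributional sense on (0,1). -/
open MeasureTheory Set

section Auxiliary

open intervalIntegral

private lemma realBetaAux {a b : ℝ} (ha : 0 < a) (hb : 0 < b) :
    ∫ τ in (0:ℝ)..1, τ ^ (a-1) * (1-τ) ^ (b-1)
      = Real.Gamma a * Real.Gamma b / Real.Gamma (a+b) := by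
  have key : Complex.Gamma a * Complex.Gamma b
      = Complex.Gamma (a+b) * Complex.betaIntegral a b := by
    have := Complex.Gamma_mul_Gamma_eq_betaIntegral (s := (a:ℂ)) (t := (b:ℂ))
      (by simpa using ha) (by simpa using hb)
    simpa using this
  have hcoe : Complex.betaIntegral a b
      = ((∫ τ in (0:ℝ)..1, τ ^ (a-1) * (1-τ) ^ (b-1) : ℝ) : ℂ) := by
    rw [Complex.betaIntegral, ← intervalIntegral.integral_ofReal]
    refine intervalIntegral.integral_congr (fun τ hτ => ?_)
    rw [uIcc_of_le (by norm_num)] at hτ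
    rw [Complex.ofReal_mul, Complex.ofReal_cpow hτ.1,
      Complex.ofReal_cpow (by linarith [hτ.2] : (0:ℝ) ≤ 1 - τ)]
    push_cast
    ring
  rw [Complex.Gamma_ofReal, Complex.Gamma_ofReal, ← Complex.ofReal_add,
    Complex.Gamma_ofReal, hcoe, ← Complex.ofReal_mul, ← Complex.ofReal_mul] at key
  have h2 := Complex.ofReal_injective key
  have hne : Real.Gamma (a+b) ≠ 0 := (Real.Gamma_pos_of_pos (by linarith)).ne'
  field_simp
  linarith [h2]

private lemma betaKernelAux {α : ℝ} (hα1 : 1 < α) (hα2 : α < 2) {t x : ℝ} (htx : t < x) :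
    ∫ s in t..x, (x - s) ^ (1-α) * (s - t) ^ (α-1)
      = (x - t) * (Real.Gamma α * Real.Gamma (2-α)) := by
  have hxt : (0:ℝ) < x - t := sub_pos.2 htx
  have hB : ∫ τ in (0:ℝ)..1, (1-τ) ^ (1-α) * τ ^ (α-1)
      = Real.Gamma α * Real.Gamma (2-α) := by
    have h := realBetaAux (a := α) (b := 2-α) (by linarith) (by linarith)
    rw [show α + (2-α) = 2 from by ring, Real.Gamma_two, div_one,
      show (2:ℝ)-α-1 = 1-α from by ring] at h
    rw [← h]
    exact intervalIntegral.integral_congr fun τ _ => mul_comm _ _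
  have key := intervalIntegral.integral_comp_mul_add
      (a := (0:ℝ)) (b := 1) (f := fun s => (x - s) ^ (1-α) * (s - t) ^ (α-1)) hxt.ne' t
  rw [mul_zero, zero_add, mul_one, sub_add_cancel] at key
  have hcong : (∫ τ in (0:ℝ)..1,
        (fun s => (x - s) ^ (1-α) * (s - t) ^ (α-1)) ((x - t) * τ + t))
      = ∫ τ in (0:ℝ)..1, (1-τ) ^ (1-α) * τ ^ (α-1) := by
    refine intervalIntegral.integral_congr fun τ hτ => ?_
    rw [uIcc_of_le (by norm_num)] at hτ
    simp only
    rw [show x - ((x - t) * τ + t) = (x - t) * (1 - τ) from by ring,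
      show (x - t) * τ + t - t = (x - t) * τ from by ring,
      Real.mul_rpow hxt.le (by linarith [hτ.2]), Real.mul_rpow hxt.le hτ.1,
      show (x-t)^(1-α) * (1-τ)^(1-α) * ((x-t)^(α-1) * τ^(α-1))
        = ((x-t)^(1-α) * (x-t)^(α-1)) * ((1-τ)^(1-α) * τ^(α-1)) from by ring,
      ← Real.rpow_add hxt]
    norm_num
  rw [hcong, hB, smul_eq_mul] at key
  rw [key]
  field_simp

private lemma fracIntKernelIntegrable {α : ℝ} (hα2 : α < 2) {x : ℝ} (hx : 0 ≤ x) :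
    Integrable (fun s => (x-s) ^ (1-α)) (volume.restrict (Ioc 0 x)) := by
  have h0 : IntervalIntegrable (fun s : ℝ => s ^ (1-α)) volume 0 x :=
    intervalIntegrable_rpow' (by linarith)
  have h2 := h0.comp_sub_left x
  rw [sub_zero, sub_self] at h2
  exact (intervalIntegrable_iff_integrableOn_Ioc_of_le hx).mp h2.symm

private lemma fubiniAux1 {α : ℝ} (hα1 : 1 < α) (hα2 : α < 2) {g : ℝ → ℝ} (hg : Measurable g)
    (hgi : IntegrableOn g (Ioc 0 1)) {x : ℝ} (hx : x ∈ Ioc (0:ℝ) 1) :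
    Integrable (fun s => (x-s) ^ (1-α) * ∫ t in Ioc 0 s, (s-t) ^ (α-1) * g t)
      (volume.restrict (Ioc 0 x)) ∧
    (∫ s in Ioc 0 x, (x-s) ^ (1-α) * ∫ t in Ioc 0 s, (s-t) ^ (α-1) * g t)
      = (Real.Gamma α * Real.Gamma (2-α)) * ∫ t in Ioc 0 x, (x-t) * g t := by
  set S : Set (ℝ × ℝ) := {p : ℝ × ℝ | 0 < p.2 ∧ p.2 ≤ p.1} with hSdef
  set F : ℝ × ℝ → ℝ := fun p => (x - p.1) ^ (1-α) * ((p.1 - p.2) ^ (α-1) * g p.2) with hFdef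
  set K : ℝ × ℝ → ℝ := S.indicator F with hKdef
  have hS : MeasurableSet S :=
    (measurableSet_lt measurable_const measurable_snd).inter
      (measurableSet_le measurable_snd measurable_fst)
  have hFm : Measurable F :=
    ((measurable_const.sub measurable_fst).pow_const _).mul
      (((measurable_fst.sub measurable_snd).pow_const _).mul (hg.comp measurable_snd))
  have hKm : Measurable K := hFm.indicator hS
  have h1 : Integrable (fun s => (x-s) ^ (1-α)) (volume.restrict (Ioc 0 x)) :=
    fracIntKernelIntegrable hα2 hx.1.le
  have h2 : Integrable (fun t => ‖g t‖) (volume.restrict (Ioc 0 x)) :=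
    (hgi.mono_set (Ioc_subset_Ioc_right hx.2)).norm
  have hK_int : Integrable K ((volume.restrict (Ioc 0 x)).prod (volume.restrict (Ioc 0 x))) := by
    refine (h1.mul_prod h2).mono' hKm.aestronglyMeasurable ?_
    rw [Measure.prod_restrict]
    filter_upwards [ae_restrict_mem (measurableSet_Ioc.prod measurableSet_Ioc)] with p hp
    have h1' : (0:ℝ) ≤ x - p.1 := sub_nonneg.2 hp.1.2
    by_cases hpS : p ∈ S
    · rw [hKdef, Set.indicator_of_mem hpS]
      have h2' : (0:ℝ) ≤ p.1 - p.2 := sub_nonneg.2 hpS.2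
      have h3 : (p.1 - p.2) ^ (α-1) ≤ 1 :=
        Real.rpow_le_one h2' (by linarith [hp.1.2, hp.2.1, hx.2]) (by linarith)
      rw [hFdef]
      simp only [norm_mul, Real.norm_eq_abs, abs_of_nonneg (Real.rpow_nonneg h1' _),
        abs_of_nonneg (Real.rpow_nonneg h2' _)]
      calc (x - p.1) ^ (1-α) * ((p.1 - p.2) ^ (α-1) * |g p.2|)
          ≤ (x - p.1) ^ (1-α) * (1 * |g p.2|) := by
            refine mul_le_mul_of_nonneg_left
              (mul_le_mul_of_nonneg_right h3 (abs_nonneg _)) (Real.rpow_nonneg h1' _)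
        _ = (x - p.1) ^ (1-α) * ‖g p.2‖ := by rw [one_mul, Real.norm_eq_abs]
    · rw [hKdef, Set.indicator_of_notMem hpS]
      simp only [norm_zero]
      exact mul_nonneg (Real.rpow_nonneg h1' _) (norm_nonneg _)
  have hinner : ∀ s ∈ Ioc (0:ℝ) x,
      (∫ t in Ioc 0 x, K (s, t)) = (x-s) ^ (1-α) * ∫ t in Ioc 0 s, (s-t) ^ (α-1) * g t := by
    intro s hs
    have e1 : ∀ t, K (s, t)
        = (Ioc 0 s).indicator (fun t => (x-s) ^ (1-α) * ((s-t) ^ (α-1) * g t)) t := by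
      intro t
      by_cases h : t ∈ Ioc 0 s
      · rw [hKdef, Set.indicator_of_mem (show (s,t) ∈ S from ⟨h.1, h.2⟩), Set.indicator_of_mem h]
      · rw [hKdef, Set.indicator_of_notMem (show (s,t) ∉ S from fun hc => h ⟨hc.1, hc.2⟩),
          Set.indicator_of_notMem h]
    simp_rw [e1]
    rw [setIntegral_indicator measurableSet_Ioc,
      Set.inter_eq_self_of_subset_right (Ioc_subset_Ioc_right hs.2), MeasureTheory.integral_const_mul]
  have houter : ∀ t ∈ Ioc (0:ℝ) x,
      (∫ s in Ioc 0 x, K (s, t)) = (Real.Gamma α * Real.Gamma (2-α)) * ((x - t) * g t) := by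
    intro t ht
    have e1 : ∀ s, K (s, t)
        = (Ici t).indicator (fun s => ((x-s) ^ (1-α) * (s-t) ^ (α-1)) * g t) s := by
      intro s
      by_cases h : t ≤ s
      · rw [hKdef, Set.indicator_of_mem (show (s,t) ∈ S from ⟨ht.1, h⟩),
          Set.indicator_of_mem (mem_Ici.mpr h)]
        rw [hFdef]; ring
      · rw [hKdef, Set.indicator_of_notMem (show (s,t) ∉ S from fun hc => h hc.2),
          Set.indicator_of_notMem (fun hc => h (mem_Ici.mp hc))]
    simp_rw [e1]
    rw [setIntegral_indicator measurableSet_Ici]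
    have hset : Ioc 0 x ∩ Ici t = Icc t x := by
      ext s
      simp only [mem_inter_iff, mem_Ioc, mem_Ici, mem_Icc]
      constructor
      · rintro ⟨⟨_, h2⟩, h3⟩; exact ⟨h3, h2⟩
      · rintro ⟨h1', h2⟩; exact ⟨⟨lt_of_lt_of_le ht.1 h1', h2⟩, h1'⟩
    rw [hset, integral_Icc_eq_integral_Ioc, ← intervalIntegral.integral_of_le ht.2,
      intervalIntegral.integral_mul_const]
    rcases eq_or_lt_of_le ht.2 with he | hlt
    · rw [he]
      simp [intervalIntegral.integral_same]
    · rw [betaKernelAux hα1 hα2 hlt]; ring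
  constructor
  · have hint := hK_int.integral_prod_left
    refine hint.congr ?_
    filter_upwards [ae_restrict_mem measurableSet_Ioc] with s hs using hinner s hs
  · calc (∫ s in Ioc 0 x, (x-s) ^ (1-α) * ∫ t in Ioc 0 s, (s-t) ^ (α-1) * g t)
        = ∫ s in Ioc 0 x, ∫ t in Ioc 0 x, K (s, t) :=
          (setIntegral_congr_fun measurableSet_Ioc (fun s hs => (hinner s hs).symm))
      _ = ∫ t in Ioc 0 x, ∫ s in Ioc 0 x, K (s, t) := integral_integral_swap hK_int
      _ = ∫ t in Ioc 0 x, (Real.Gamma α * Real.Gamma (2-α)) * ((x - t) * g t) :=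
          setIntegral_congr_fun measurableSet_Ioc (fun t ht => houter t ht)
      _ = (Real.Gamma α * Real.Gamma (2-α)) * ∫ t in Ioc 0 x, (x-t) * g t :=
          integral_const_mul _ _

private lemma partsAux {φ : ℝ → ℝ} (hφ : ContDiff ℝ (⊤ : ℕ∞) φ) (hsupp : tsupport φ ⊆ Ioo 0 1) {t : ℝ}
    (_ht : t ≤ 1) : ∫ x in t..1, (x - t) * deriv (deriv φ) x = φ t := by
  have hφ' : ContDiff ℝ ((⊤:ℕ∞) : WithTop ℕ∞) φ := hφ.of_le (by simp)
  have hφd : Differentiable ℝ φ := (contDiff_infty_iff_deriv.mp hφ').1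
  have hφ1 : ContDiff ℝ ((⊤:ℕ∞) : WithTop ℕ∞) (deriv φ) := (contDiff_infty_iff_deriv.mp hφ').2
  have hφ1d : Differentiable ℝ (deriv φ) := (contDiff_infty_iff_deriv.mp hφ1).1
  have hφ2c : Continuous (deriv (deriv φ)) := ((contDiff_infty_iff_deriv.mp hφ1).2).continuous
  have hn1 : (1:ℝ) ∉ tsupport φ := fun h => lt_irrefl 1 (hsupp h).2
  have h1 : φ 1 = 0 := image_eq_zero_of_notMem_tsupport hn1
  have hd1 : deriv φ 1 = 0 := by
    have ho : (tsupport φ)ᶜ ∈ nhds (1:ℝ) := (isClosed_tsupport φ).isOpen_compl.mem_nhds hn1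
    have heq : φ =ᶠ[nhds (1:ℝ)] (fun _ => 0) :=
      Filter.eventuallyEq_of_mem ho (fun y hy => image_eq_zero_of_notMem_tsupport hy)
    rw [heq.deriv_eq]
    exact deriv_const _ _
  rw [intervalIntegral.integral_mul_deriv_eq_deriv_mul
      (u := fun x => x - t) (u' := fun _ => 1) (v := deriv φ) (v' := deriv (deriv φ))
      (fun x _ => (hasDerivAt_id x).sub_const t)
      (fun x _ => (hφ1d x).hasDerivAt)
      intervalIntegrable_const (hφ2c.intervalIntegrable _ _)]
  simp only [one_mul]
  rw [intervalIntegral.integral_deriv_eq_sub (fun x _ => hφd x)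
    (hφ1.continuous.intervalIntegrable _ _), hd1, h1]
  ring

set_option maxHeartbeats 1000000 in
private lemma fubiniAux2 {g φ : ℝ → ℝ} (hg : Measurable g) (hgi : IntegrableOn g (Ioc 0 1))
    (hφ : ContDiff ℝ (⊤ : ℕ∞) φ) (hsupp : tsupport φ ⊆ Ioo 0 1) :
    (∫ x in Ioc (0:ℝ) 1, (∫ t in Ioc 0 x, (x - t) * g t) * deriv (deriv φ) x)
      = ∫ t in Ioc (0:ℝ) 1, g t * φ t := by
  have hφ' : ContDiff ℝ ((⊤:ℕ∞) : WithTop ℕ∞) φ := hφ.of_le (by simp)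
  have hφ1 : ContDiff ℝ ((⊤:ℕ∞) : WithTop ℕ∞) (deriv φ) := (contDiff_infty_iff_deriv.mp hφ').2
  have hφ2c : Continuous (deriv (deriv φ)) := ((contDiff_infty_iff_deriv.mp hφ1).2).continuous
  obtain ⟨C, hC⟩ : ∃ C, ∀ y ∈ Icc (0:ℝ) 1, ‖deriv (deriv φ) y‖ ≤ C :=
    isCompact_Icc.exists_bound_of_continuousOn hφ2c.continuousOn
  set S : Set (ℝ × ℝ) := {p : ℝ × ℝ | 0 < p.2 ∧ p.2 ≤ p.1} with hSdef
  set F : ℝ × ℝ → ℝ := fun p => ((p.1 - p.2) * deriv (deriv φ) p.1) * g p.2 with hFdef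
  set K : ℝ × ℝ → ℝ := S.indicator F with hKdef
  have hS : MeasurableSet S :=
    (measurableSet_lt measurable_const measurable_snd).inter
      (measurableSet_le measurable_snd measurable_fst)
  have hFm : Measurable F :=
    ((measurable_fst.sub measurable_snd).mul (hφ2c.measurable.comp measurable_fst)).mul
      (hg.comp measurable_snd)
  have hKm : Measurable K := hFm.indicator hS
  have hK_int : Integrable K
      ((volume.restrict (Ioc (0:ℝ) 1)).prod (volume.restrict (Ioc (0:ℝ) 1))) := by
    have hconst : Integrable (fun _ : ℝ => C) (volume.restrict (Ioc (0:ℝ) 1)) := by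
      refine (integrableOn_const_iff (by finiteness)).mpr (Or.inr ?_)
      rw [Real.volume_Ioc]
      exact ENNReal.ofReal_lt_top
    refine (hconst.mul_prod hgi.norm).mono' hKm.aestronglyMeasurable ?_
    rw [Measure.prod_restrict]
    filter_upwards [ae_restrict_mem (measurableSet_Ioc.prod measurableSet_Ioc)] with p hp
    refine le_trans (norm_indicator_le_norm_self F p) ?_
    rw [hFdef]
    simp only [norm_mul]
    have h1 : ‖p.1 - p.2‖ ≤ 1 := by
      rw [Real.norm_eq_abs, abs_le]
      constructor
      · linarith [hp.1.1, hp.2.2]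
      · linarith [hp.1.2, hp.2.1]
    have h2 : ‖deriv (deriv φ) p.1‖ ≤ C := hC p.1 ⟨hp.1.1.le, hp.1.2⟩
    calc ‖p.1 - p.2‖ * ‖deriv (deriv φ) p.1‖ * ‖g p.2‖
        ≤ 1 * C * ‖g p.2‖ := by
          refine mul_le_mul_of_nonneg_right (mul_le_mul h1 h2 (norm_nonneg _) (by norm_num))
            (norm_nonneg _)
      _ = C * ‖g p.2‖ := by ring
  have hinner : ∀ x ∈ Ioc (0:ℝ) 1,
      (∫ t in Ioc (0:ℝ) 1, K (x, t)) = (∫ t in Ioc 0 x, (x - t) * g t) * deriv (deriv φ) x := by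
    intro x hx
    have e1 : ∀ t, K (x, t)
        = (Ioc 0 x).indicator (fun t => ((x - t) * g t) * deriv (deriv φ) x) t := by
      intro t
      by_cases h : t ∈ Ioc 0 x
      · rw [hKdef, Set.indicator_of_mem (show (x,t) ∈ S from ⟨h.1, h.2⟩), Set.indicator_of_mem h]
        rw [hFdef]; ring
      · rw [hKdef, Set.indicator_of_notMem (show (x,t) ∉ S from fun hc => h ⟨hc.1, hc.2⟩),
          Set.indicator_of_notMem h]
    simp_rw [e1]
    rw [setIntegral_indicator measurableSet_Ioc,
      Set.inter_eq_self_of_subset_right (Ioc_subset_Ioc_right hx.2), MeasureTheory.integral_mul_const]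
  have houter : ∀ t ∈ Ioc (0:ℝ) 1, (∫ x in Ioc (0:ℝ) 1, K (x, t)) = g t * φ t := by
    intro t ht
    have e1 : ∀ x, K (x, t)
        = (Ici t).indicator (fun x => ((x - t) * deriv (deriv φ) x) * g t) x := by
      intro x
      by_cases h : t ≤ x
      · rw [hKdef, Set.indicator_of_mem (show (x,t) ∈ S from ⟨ht.1, h⟩),
          Set.indicator_of_mem (mem_Ici.mpr h)]
      · rw [hKdef, Set.indicator_of_notMem (show (x,t) ∉ S from fun hc => h hc.2),
          Set.indicator_of_notMem (fun hc => h (mem_Ici.mp hc))]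
    simp_rw [e1]
    rw [setIntegral_indicator measurableSet_Ici]
    have hset : Ioc (0:ℝ) 1 ∩ Ici t = Icc t 1 := by
      ext s
      simp only [mem_inter_iff, mem_Ioc, mem_Ici, mem_Icc]
      constructor
      · rintro ⟨⟨_, h2⟩, h3⟩; exact ⟨h3, h2⟩
      · rintro ⟨h1', h2⟩; exact ⟨⟨lt_of_lt_of_le ht.1 h1', h2⟩, h1'⟩
    rw [hset, integral_Icc_eq_integral_Ioc, ← intervalIntegral.integral_of_le ht.2,
      intervalIntegral.integral_mul_const, partsAux hφ hsupp ht.2]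
    ring
  calc (∫ x in Ioc (0:ℝ) 1, (∫ t in Ioc 0 x, (x - t) * g t) * deriv (deriv φ) x)
      = ∫ x in Ioc (0:ℝ) 1, ∫ t in Ioc (0:ℝ) 1, K (x, t) :=
        setIntegral_congr_fun measurableSet_Ioc (fun x hx => (hinner x hx).symm)
    _ = ∫ t in Ioc (0:ℝ) 1, ∫ x in Ioc (0:ℝ) 1, K (x, t) := integral_integral_swap hK_int
    _ = ∫ t in Ioc (0:ℝ) 1, g t * φ t :=
        setIntegral_congr_fun measurableSet_Ioc (fun t ht => houter t ht)

end Auxiliary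

/-- Left-sided Riemann-Liouville fractional integral of order `γ`. -/
noncomputable def leftFracInt (γ : ℝ) (f : ℝ → ℝ) (x : ℝ) : ℝ :=
  (1 / Real.Gamma γ) * ∫ t in (0:ℝ)..x, (x - t) ^ (γ - 1) * f t

set_option maxHeartbeats 1000000 in
/-- Solution representation in the Riemann-Liouville case: for `α ∈ (1,2)` and
`f ∈ L²(0,1)`, `u = -₀I^α f + (₀I^α f)(1)·x^{α-1}` satisfies `u(0) = u(1) = 0` and
`ᴿD₀^α u = -f` in the distributional sense on `(0,1)`. -/
theorem solRep_RiemannLiouville (α : ℝ) (hα : α ∈ Set.Ioo (1:ℝ) 2)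
    (f : ℝ → ℝ) (hf : MemLp f 2 (volume.restrict (Set.Ioo (0:ℝ) 1)))
    (u : ℝ → ℝ)
    (hu : ∀ x, u x = - leftFracInt α f x + leftFracInt α f 1 * x ^ (α - 1)) :
    u 0 = 0 ∧ u 1 = 0 ∧
    ∀ φ : ℝ → ℝ, ContDiff ℝ (⊤ : ℕ∞) φ → tsupport φ ⊆ Set.Ioo (0:ℝ) 1 →
      ∫ x in (0:ℝ)..1, leftFracInt (2 - α) u x * deriv (deriv φ) x
        = ∫ x in (0:ℝ)..1, (- f x) * φ x := by
  obtain ⟨hα1, hα2⟩ := hα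
  have hGα : 0 < Real.Gamma α := Real.Gamma_pos_of_pos (by linarith)
  have hG2α : 0 < Real.Gamma (2-α) := Real.Gamma_pos_of_pos (by linarith)
  -- measurable representative
  set g : ℝ → ℝ := hf.1.mk f with hgdef
  have hgmeas : Measurable g := hf.1.stronglyMeasurable_mk.measurable
  have hfg : ∀ᵐ t : ℝ ∂volume, t ∈ Ioo (0:ℝ) 1 → f t = g t :=
    (ae_restrict_iff' measurableSet_Ioo).mp hf.1.ae_eq_mk
  haveI : IsFiniteMeasure (volume.restrict (Ioo (0:ℝ) 1)) := by
    refine ⟨?_⟩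
    rw [Measure.restrict_apply_univ, Real.volume_Ioo]
    exact ENNReal.ofReal_lt_top
  have hfi : IntegrableOn f (Ioo 0 1) := hf.integrable (by norm_num)
  have hgi1 : IntegrableOn g (Ioo 0 1) := hfi.congr hf.1.ae_eq_mk
  have hgi : IntegrableOn g (Ioc 0 1) := by
    rw [integrableOn_Ioc_iff_integrableOn_Ioo]
    exact hgi1
  have hne1 : ∀ᵐ t : ℝ ∂volume, t ≠ 1 :=
    ae_iff.mpr (by simpa using measure_singleton (1:ℝ))
  -- the fractional integral of `f` agrees with that of `g` on `[0,1]`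
  have hIfg : ∀ s ∈ Icc (0:ℝ) 1, leftFracInt α f s = leftFracInt α g s := by
    intro s hs
    rw [leftFracInt, leftFracInt]
    congr 1
    simp only [intervalIntegral.integral_of_le hs.1]
    refine setIntegral_congr_ae measurableSet_Ioc ?_
    filter_upwards [hfg, hne1] with t h1 h2 h3
    rw [h1 ⟨h3.1, lt_of_le_of_ne (le_trans h3.2 hs.2) h2⟩]
  -- key identity for the fractional integral of `u`
  have hmain : ∀ x ∈ Ioc (0:ℝ) 1, leftFracInt (2-α) u x
      = -(∫ t in Ioc 0 x, (x - t) * g t) + (leftFracInt α f 1 * Real.Gamma α) * x := by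
    intro x hx
    obtain ⟨hfub_int, hfub_eq⟩ := fubiniAux1 hα1 hα2 hgmeas hgi hx
    have h1 : Integrable (fun s => (x-s) ^ (1-α)) (volume.restrict (Ioc 0 x)) :=
      fracIntKernelIntegrable hα2 hx.1.le
    have hpi2 : Integrable (fun s => (x-s) ^ (1-α) * s ^ (α-1)) (volume.restrict (Ioc 0 x)) := by
      refine h1.mono' (((measurable_const.sub measurable_id).pow_const
        _).mul (measurable_id.pow_const _)).aestronglyMeasurable ?_
      filter_upwards [ae_restrict_mem measurableSet_Ioc] with s hs
      have h1' : (0:ℝ) ≤ x - s := sub_nonneg.2 hs.2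
      have h2' : s ^ (α-1) ≤ 1 :=
        Real.rpow_le_one hs.1.le (le_trans hs.2 hx.2) (by linarith)
      rw [Real.norm_eq_abs, abs_mul, abs_of_nonneg (Real.rpow_nonneg h1' _),
        abs_of_nonneg (Real.rpow_nonneg hs.1.le _)]
      calc (x - s) ^ (1-α) * s ^ (α-1) ≤ (x - s) ^ (1-α) * 1 :=
            mul_le_mul_of_nonneg_left h2' (Real.rpow_nonneg h1' _)
        _ = (x - s) ^ (1-α) := mul_one _
    have expand : leftFracInt (2-α) u x
        = (1/Real.Gamma (2-α)) * ∫ s in Ioc 0 x, (x-s) ^ (1-α) * u s := by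
      rw [leftFracInt, intervalIntegral.integral_of_le hx.1.le]
      congr 1
      refine setIntegral_congr_fun measurableSet_Ioc (fun s _ => ?_)
      rw [show (2:ℝ)-α-1 = 1-α from by ring]
    have hsplit : (∫ s in Ioc 0 x, (x-s) ^ (1-α) * u s)
        = ∫ s in Ioc 0 x,
            (-((1/Real.Gamma α) * ((x-s) ^ (1-α) * ∫ t in Ioc 0 s, (s-t) ^ (α-1) * g t))
              + leftFracInt α f 1 * ((x-s) ^ (1-α) * s ^ (α-1))) := by
      refine setIntegral_congr_fun measurableSet_Ioc (fun s hs => ?_)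
      have hus : u s = -leftFracInt α g s + leftFracInt α f 1 * s ^ (α-1) := by
        rw [hu s, hIfg s ⟨hs.1.le, le_trans hs.2 hx.2⟩]
      rw [hus, leftFracInt, intervalIntegral.integral_of_le hs.1.le]
      ring
    have hB2 : (∫ s in Ioc 0 x, (x-s) ^ (1-α) * s ^ (α-1))
        = x * (Real.Gamma α * Real.Gamma (2-α)) := by
      rw [← intervalIntegral.integral_of_le hx.1.le]
      have h := betaKernelAux hα1 hα2 (t := 0) (x := x) hx.1
      simpa using h
    have hA : Integrable
        (fun s => (1/Real.Gamma α) * ((x-s) ^ (1-α) * ∫ t in Ioc 0 s, (s-t) ^ (α-1) * g t))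
        (volume.restrict (Ioc 0 x)) := hfub_int.const_mul _
    have hB : Integrable (fun s => leftFracInt α f 1 * ((x-s) ^ (1-α) * s ^ (α-1)))
        (volume.restrict (Ioc 0 x)) := hpi2.const_mul _
    have hA' : Integrable
        (fun s => -((1/Real.Gamma α) * ((x-s) ^ (1-α) * ∫ t in Ioc 0 s, (s-t) ^ (α-1) * g t)))
        (volume.restrict (Ioc 0 x)) := hA.neg
    rw [expand, hsplit, integral_add hA' hB, integral_neg, integral_const_mul,
      integral_const_mul, hfub_eq, hB2]
    field_simp
  refine ⟨?_, ?_, ?_⟩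
  · rw [hu 0, Real.zero_rpow (by intro h; apply absurd h; intro h'; linarith [sub_eq_zero.mp h'] : α - 1 ≠ 0)]
    rw [leftFracInt, intervalIntegral.integral_same]
    simp
  · rw [hu 1, Real.one_rpow]
    ring
  · intro φ hφ hsupp
    have hφ' : ContDiff ℝ ((⊤:ℕ∞) : WithTop ℕ∞) φ := hφ.of_le (by simp)
    have hφ1 : ContDiff ℝ ((⊤:ℕ∞) : WithTop ℕ∞) (deriv φ) := (contDiff_infty_iff_deriv.mp hφ').2
    have hφ2c : Continuous (deriv (deriv φ)) := ((contDiff_infty_iff_deriv.mp hφ1).2).continuous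
    set F : ℝ → ℝ := fun x => ∫ t in Ioc 0 x, (x - t) * g t with hFdef
    -- continuity of F on [0,1]
    have hgIcc : IntegrableOn g (Icc 0 1) := by
      rw [integrableOn_Icc_iff_integrableOn_Ioc]
      exact hgi
    have htg : IntegrableOn (fun t => t * g t) (Icc (0:ℝ) 1) := by
      refine hgIcc.norm.mono' ((measurable_id.mul hgmeas).aestronglyMeasurable) ?_
      filter_upwards [ae_restrict_mem measurableSet_Icc] with t ht
      rw [Real.norm_eq_abs, abs_mul]
      calc |t| * |g t| ≤ 1 * |g t| := by
            refine mul_le_mul_of_nonneg_right ?_ (abs_nonneg _)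
            rw [abs_le]; exact ⟨by linarith [ht.1], ht.2⟩
        _ = ‖g t‖ := by rw [one_mul, Real.norm_eq_abs]
    have hFeq : ∀ x ∈ Icc (0:ℝ) 1,
        F x = x * (∫ t in Ioc 0 x, g t) - ∫ t in Ioc 0 x, t * g t := by
      intro x hx
      have hgx : IntegrableOn g (Ioc 0 x) := hgi.mono_set (Ioc_subset_Ioc_right hx.2)
      have htgx : IntegrableOn (fun t => t * g t) (Ioc 0 x) :=
        (htg.mono_set (Ioc_subset_Icc_self.trans (Icc_subset_Icc_right hx.2)))
      rw [hFdef]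
      simp only
      rw [show (fun t => (x - t) * g t) = fun t => x * g t - t * g t from funext fun t => by ring,
        integral_sub (hgx.const_mul x) htgx, integral_const_mul]
    have hFcont : ContinuousOn F (Icc (0:ℝ) 1) := by
      have c1 : ContinuousOn (fun x => ∫ t in Ioc (0:ℝ) x, g t) (Icc 0 1) :=
        intervalIntegral.continuousOn_primitive hgIcc
      have c2 : ContinuousOn (fun x => ∫ t in Ioc (0:ℝ) x, t * g t) (Icc 0 1) :=
        intervalIntegral.continuousOn_primitive htg
      exact ((continuousOn_id.mul c1).sub c2).congr hFeq
    have iF : IntegrableOn (fun x => F x * deriv (deriv φ) x) (Ioc (0:ℝ) 1) :=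
      ((hFcont.mul hφ2c.continuousOn).integrableOn_Icc).mono_set Ioc_subset_Icc_self
    have ix : IntegrableOn
        (fun x => (leftFracInt α f 1 * Real.Gamma α) * (x * deriv (deriv φ) x)) (Ioc (0:ℝ) 1) :=
      ((continuous_const.mul (continuous_id.mul hφ2c)).integrableOn_Icc).mono_set
        Ioc_subset_Icc_self
    have hx0 : ∫ x in Ioc (0:ℝ) 1, x * deriv (deriv φ) x = 0 := by
      rw [← intervalIntegral.integral_of_le (by norm_num : (0:ℝ) ≤ 1)]
      have h := partsAux hφ hsupp (t := 0) (by norm_num)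
      have h0 : φ 0 = 0 := image_eq_zero_of_notMem_tsupport (fun h' => lt_irrefl 0 (hsupp h').1)
      simpa [h0] using h
    calc ∫ x in (0:ℝ)..1, leftFracInt (2 - α) u x * deriv (deriv φ) x
        = ∫ x in Ioc (0:ℝ) 1, leftFracInt (2 - α) u x * deriv (deriv φ) x :=
          intervalIntegral.integral_of_le (by norm_num)
      _ = ∫ x in Ioc (0:ℝ) 1,
            (-(F x * deriv (deriv φ) x)
              + (leftFracInt α f 1 * Real.Gamma α) * (x * deriv (deriv φ) x)) := by
          refine setIntegral_congr_fun measurableSet_Ioc (fun x hx => ?_)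
          rw [hmain x hx]
          ring
      _ = -(∫ x in Ioc (0:ℝ) 1, F x * deriv (deriv φ) x)
            + (leftFracInt α f 1 * Real.Gamma α) * ∫ x in Ioc (0:ℝ) 1, x * deriv (deriv φ) x := by
          have iF' : IntegrableOn (fun x => -(F x * deriv (deriv φ) x)) (Ioc (0:ℝ) 1) := iF.neg
          rw [integral_add iF' ix, integral_neg, integral_const_mul]
      _ = -(∫ t in Ioc (0:ℝ) 1, g t * φ t) := by
          rw [fubiniAux2 hgmeas hgi hφ hsupp, hx0]
          ring
      _ = ∫ x in Ioc (0:ℝ) 1, (- f x) * φ x := by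
          rw [← integral_neg]
          refine setIntegral_congr_ae measurableSet_Ioc ?_
          filter_upwards [hfg, hne1] with t h1 h2 h3
          rw [h1 ⟨h3.1, lt_of_le_of_ne h3.2 h2⟩]
          ring
      _ = ∫ x in (0:ℝ)..1, (- f x) * φ x :=
          (intervalIntegral.integral_of_le (by norm_num)).symm
end

section
/- Let α ∈ (3/2,2) and define P_V ψ = ψ − Γ(α)(ₓI₁^{α−1} ψ)(0) for ψ ∈ L²(0,1). Then P_V is a bounded linear operator on L²(0,1), and for any absolutely continuous ψ with ψ(0) = ψ(1) = 0 and ψ′ ∈ L²(0,1), setting φ = ᴿD₁^{α−1} ψ = −ₓI₁^{2−α}(ψ)′ one has P_V φ = φ. -/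
/-!
`P_V ψ` differs from `ψ` by the constant `Γ(α)/Γ(α-1) ∫₀¹ t^{α-2} ψ(t) dt`, and `t^{α-2} ∈ L²(0,1)`
because `α > 3/2`, so Cauchy–Schwarz bounds `P_V`.

For the fixed point, `ψ(1) = 0` gives `ψ = -I¹ψ'` with `I^γ = ₓI₁^γ`. The semigroup law
`I^β I^γ = I^{β+γ}` (Fubini on the triangle `x < t < s < 1` and the Beta integral) turns
`I^{2-α}ψ` into `-I¹ I^{2-α}ψ'`, so by Lebesgue differentiation `φ = -I^{2-α}ψ'` a.e., and then
`I^{α-1}φ = -I¹ψ' = ψ`. Hence `(I^{α-1}φ)(0) = ψ(0) = 0` and the constant in `P_V φ` vanishes.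
-/

open MeasureTheory Set

/-- Right-sided Riemann-Liouville fractional integral of order `γ`. -/
noncomputable def rightFracInt (γ : ℝ) (f : ℝ → ℝ) (x : ℝ) : ℝ :=
  (1 / Real.Gamma γ) * ∫ t in x..(1:ℝ), (t - x) ^ (γ - 1) * f t

/-- The operator `P_V ψ = ψ - Γ(α)(ₓI₁^{α-1} ψ)(0)`. -/
noncomputable def PV (α : ℝ) (ψ : ℝ → ℝ) (x : ℝ) : ℝ :=
  ψ x - Real.Gamma α * rightFracInt (α - 1) ψ 0

section Kernels

lemma integrableOn_sub_rpow_Ioo {r : ℝ} (hr : -1 < r) (x s : ℝ) :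
    IntegrableOn (fun t => (t - x) ^ r) (Ioo x s) := by
  rcases le_or_gt x s with hxs | hxs
  · have := (intervalIntegral.intervalIntegrable_rpow' hr (a := 0) (b := s - x)).comp_sub_right x
    simp only [zero_add, sub_add_cancel] at this
    exact ((intervalIntegrable_iff_integrableOn_Ioc_of_le hxs).mp this).mono_set
      Ioo_subset_Ioc_self
  · simp [Ioo_eq_empty_of_le hxs.le]

lemma integrableOn_rpow_sub_Ioo {r : ℝ} (hr : -1 < r) (x s : ℝ) :
    IntegrableOn (fun t => (s - t) ^ r) (Ioo x s) := by
  rcases le_or_gt x s with hxs | hxs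
  · have := (intervalIntegral.intervalIntegrable_rpow' hr (a := 0) (b := s - x)).comp_sub_left s
    simp only [sub_zero, sub_sub_cancel] at this
    exact ((intervalIntegrable_iff_integrableOn_Ioc_of_le hxs).mp this.symm).mono_set
      Ioo_subset_Ioc_self
  · simp [Ioo_eq_empty_of_le hxs.le]

lemma rpow_le_max_of_mem_Icc {d e u : ℝ} (c : ℝ) (hd : 0 < d) (hu : u ∈ Icc d e) :
    u ^ c ≤ max (d ^ c) (e ^ c) := by
  rcases le_total c 0 with hc | hc
  · exact (Real.rpow_le_rpow_of_nonpos hd hu.1 hc).trans (le_max_left _ _)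
  · exact (Real.rpow_le_rpow (hd.le.trans hu.1) hu.2 hc).trans (le_max_right _ _)

/-- On each half of `(x, s)`, one of the two factors is bounded by a constant. -/
lemma exists_sub_rpow_mul_rpow_sub_le (a b x s : ℝ) : ∃ C D : ℝ, ∀ t ∈ Ioo x s,
    (t - x) ^ a * (s - t) ^ b ≤ C * (t - x) ^ a + D * (s - t) ^ b := by
  refine ⟨max (((s - x) / 2) ^ b) ((s - x) ^ b), max (((s - x) / 2) ^ a) ((s - x) ^ a), ?_⟩
  rintro t ⟨hxt, hts⟩
  have ha := Real.rpow_nonneg (sub_pos.2 hxt).le a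
  have hb := Real.rpow_nonneg (sub_pos.2 hts).le b
  have hd : 0 < (s - x) / 2 := by linarith
  rcases le_total t ((x + s) / 2) with h | h
  · have := rpow_le_max_of_mem_Icc b hd (u := s - t) (e := s - x) ⟨by linarith, by linarith⟩
    nlinarith [(Real.rpow_nonneg hd.le a).trans (le_max_left _ ((s - x) ^ a))]
  · have := rpow_le_max_of_mem_Icc a hd (u := t - x) (e := s - x) ⟨by linarith, by linarith⟩
    nlinarith [(Real.rpow_nonneg hd.le b).trans (le_max_left _ ((s - x) ^ b))]

lemma integrableOn_sub_rpow_mul_rpow_sub_Ioo {a b : ℝ} (ha : -1 < a) (hb : -1 < b) (x s : ℝ) :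
    IntegrableOn (fun t => (t - x) ^ a * (s - t) ^ b) (Ioo x s) := by
  obtain ⟨C, D, hCD⟩ := exists_sub_rpow_mul_rpow_sub_le a b x s
  refine Integrable.mono' (((integrableOn_sub_rpow_Ioo ha x s).const_mul C).add
    ((integrableOn_rpow_sub_Ioo hb x s).const_mul D)) (by fun_prop) ?_
  filter_upwards [ae_restrict_mem measurableSet_Ioo] with t ht
  rw [Real.norm_of_nonneg (mul_nonneg (Real.rpow_nonneg (sub_pos.2 ht.1).le a)
    (Real.rpow_nonneg (sub_pos.2 ht.2).le b))]
  exact hCD t ht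

lemma integral_Ioo_rpow_mul_one_sub_rpow {β γ : ℝ} (hβ : 0 < β) (hγ : 0 < γ) :
    ∫ u in Ioo 0 1, u ^ (β - 1) * (1 - u) ^ (γ - 1)
      = Real.Gamma β * Real.Gamma γ / Real.Gamma (β + γ) := by
  have h := Complex.betaIntegral_eq_Gamma_mul_div β γ (by simpa) (by simpa)
  have hreal : Complex.betaIntegral β γ
      = ((∫ u in (0:ℝ)..1, u ^ (β - 1) * (1 - u) ^ (γ - 1) : ℝ) : ℂ) := by
    rw [Complex.betaIntegral, ← intervalIntegral.integral_ofReal]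
    refine intervalIntegral.integral_congr fun u hu => ?_
    rw [uIcc_of_le zero_le_one] at hu
    push_cast
    rw [Complex.ofReal_cpow hu.1, Complex.ofReal_cpow (sub_nonneg.2 hu.2)]
    push_cast
    ring_nf
  rw [hreal, ← Complex.ofReal_add, Complex.Gamma_ofReal, Complex.Gamma_ofReal,
    Complex.Gamma_ofReal] at h
  rw [← integral_Ioc_eq_integral_Ioo, ← intervalIntegral.integral_of_le zero_le_one]
  exact_mod_cast h

lemma integral_Ioo_sub_rpow_mul_rpow_sub {β γ x s : ℝ} (hβ : 0 < β) (hγ : 0 < γ) (hxs : x < s) :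
    ∫ t in Ioo x s, (t - x) ^ (β - 1) * (s - t) ^ (γ - 1)
      = Real.Gamma β * Real.Gamma γ / Real.Gamma (β + γ) * (s - x) ^ (β + γ - 1) := by
  have hd : 0 < s - x := sub_pos.2 hxs
  have hscale : ∀ u ∈ uIcc (0:ℝ) 1,
      (x + (s - x) * u - x) ^ (β - 1) * (s - (x + (s - x) * u)) ^ (γ - 1)
        = (s - x) ^ (β + γ - 2) * (u ^ (β - 1) * (1 - u) ^ (γ - 1)) := by
    intro u hu
    rw [uIcc_of_le zero_le_one] at hu
    rw [show x + (s - x) * u - x = (s - x) * u by ring,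
      show s - (x + (s - x) * u) = (s - x) * (1 - u) by ring, Real.mul_rpow hd.le hu.1,
      Real.mul_rpow hd.le (sub_nonneg.2 hu.2), show β + γ - 2 = (β - 1) + (γ - 1) by ring,
      Real.rpow_add hd]
    ring
  have := intervalIntegral.smul_integral_comp_add_mul
    (fun t => (t - x) ^ (β - 1) * (s - t) ^ (γ - 1)) (s - x) x (a := 0) (b := 1)
  rw [intervalIntegral.integral_congr hscale, intervalIntegral.integral_const_mul,
    mul_zero, add_zero, mul_one, add_sub_cancel, smul_eq_mul] at this
  simp only [intervalIntegral.integral_of_le hxs.le, intervalIntegral.integral_of_le zero_le_one,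
    integral_Ioc_eq_integral_Ioo] at this
  rw [← this, integral_Ioo_rpow_mul_one_sub_rpow hβ hγ,
    show β + γ - 1 = (β + γ - 2) + 1 by ring, Real.rpow_add_one hd.ne']
  ring

end Kernels

section TriangleFubini

variable {a b : ℝ} {w : ℝ → ℝ → ℝ} {g : ℝ → ℝ}

lemma restrict_Ioo_restrict_Ioi {t : ℝ} (ht : a ≤ t) :
    (volume.restrict (Ioo a b)).restrict (Ioi t) = volume.restrict (Ioo t b) := by
  rw [Measure.restrict_restrict measurableSet_Ioi, Ioi_inter_Ioo, max_eq_left ht]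

lemma restrict_Ioo_restrict_Iio {s : ℝ} (hs : s ≤ b) :
    (volume.restrict (Ioo a b)).restrict (Iio s) = volume.restrict (Ioo a s) := by
  rw [Measure.restrict_restrict measurableSet_Iio, Iio_inter_Ioo, min_eq_left hs]

lemma integrable_indicator_lt_prod (hw : Measurable (Function.uncurry w))
    (hw_nonneg : ∀ t s, a < t → t < s → 0 ≤ w t s)
    (hw_int : ∀ s ∈ Ioo a b, IntegrableOn (w · s) (Ioo a s))
    (hg : AEStronglyMeasurable g (volume.restrict (Ioo a b)))
    (hwg : IntegrableOn (fun s => (∫ t in Ioo a s, w t s) * g s) (Ioo a b)) :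
    Integrable ({p : ℝ × ℝ | p.1 < p.2}.indicator fun p => w p.1 p.2 * g p.2)
      ((volume.restrict (Ioo a b)).prod (volume.restrict (Ioo a b))) := by
  set μ := volume.restrict (Ioo a b)
  have hf_meas : AEStronglyMeasurable
      ({p : ℝ × ℝ | p.1 < p.2}.indicator fun p => w p.1 p.2 * g p.2) (μ.prod μ) :=
    (hw.aestronglyMeasurable.mul (hg.comp_snd (μ := μ))).indicator
      (measurableSet_lt measurable_fst measurable_snd)
  refine (integrable_prod_iff' hf_meas).2 ⟨?_, hwg.norm.congr ?_⟩
  · filter_upwards [ae_restrict_mem measurableSet_Ioo] with s hs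
    have hsection : (fun t => {p : ℝ × ℝ | p.1 < p.2}.indicator (fun p => w p.1 p.2 * g p.2)
        (t, s)) = (Iio s).indicator fun t => w t s * g s := by
      ext t; simp [indicator]
    rw [hsection, integrable_indicator_iff measurableSet_Iio, IntegrableOn,
      restrict_Ioo_restrict_Iio hs.2.le]
    exact (hw_int s hs).mul_const _
  · filter_upwards [ae_restrict_mem measurableSet_Ioo] with s hs
    have hsection : (fun t => ‖{p : ℝ × ℝ | p.1 < p.2}.indicator (fun p => w p.1 p.2 * g p.2)
        (t, s)‖) = (Iio s).indicator fun t => ‖w t s * g s‖ := by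
      ext t; by_cases h : t < s <;> simp [indicator, h]
    have hw_pos : ∀ t ∈ Ioo a s, ‖w t s * g s‖ = w t s * ‖g s‖ := fun t ht => by
      rw [norm_mul, Real.norm_of_nonneg (hw_nonneg t s ht.1 ht.2)]
    rw [hsection, integral_indicator measurableSet_Iio, restrict_Ioo_restrict_Iio hs.2.le,
      setIntegral_congr_fun measurableSet_Ioo hw_pos, integral_mul_const, norm_mul,
      Real.norm_of_nonneg (setIntegral_nonneg measurableSet_Ioo
        fun t ht => hw_nonneg t s ht.1 ht.2)]

lemma integral_Ioo_integral_Ioo_swap (hw : Measurable (Function.uncurry w))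
    (hw_nonneg : ∀ t s, a < t → t < s → 0 ≤ w t s)
    (hw_int : ∀ s ∈ Ioo a b, IntegrableOn (w · s) (Ioo a s))
    (hg : AEStronglyMeasurable g (volume.restrict (Ioo a b)))
    (hwg : IntegrableOn (fun s => (∫ t in Ioo a s, w t s) * g s) (Ioo a b)) :
    IntegrableOn (fun t => ∫ s in Ioo t b, w t s * g s) (Ioo a b) ∧
      ∫ t in Ioo a b, ∫ s in Ioo t b, w t s * g s
        = ∫ s in Ioo a b, (∫ t in Ioo a s, w t s) * g s := by
  set f : ℝ × ℝ → ℝ := {p | p.1 < p.2}.indicator fun p => w p.1 p.2 * g p.2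
  have hf_int := integrable_indicator_lt_prod hw hw_nonneg hw_int hg hwg
  have hleft : ∀ t ∈ Ioo a b,
      ∫ s, f (t, s) ∂volume.restrict (Ioo a b) = ∫ s in Ioo t b, w t s * g s := fun t ht => by
    have hsection : (fun s => f (t, s)) = (Ioi t).indicator fun s => w t s * g s := by
      ext s; simp [f, indicator]
    rw [hsection, integral_indicator measurableSet_Ioi, restrict_Ioo_restrict_Ioi ht.1.le]
  have hright : ∀ s ∈ Ioo a b,
      ∫ t, f (t, s) ∂volume.restrict (Ioo a b) = (∫ t in Ioo a s, w t s) * g s := fun s hs => by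
    have hsection : (fun t => f (t, s)) = (Iio s).indicator fun t => w t s * g s := by
      ext t; simp [f, indicator]
    rw [hsection, integral_indicator measurableSet_Iio, restrict_Ioo_restrict_Iio hs.2.le,
      integral_mul_const]
  refine ⟨hf_int.integral_prod_left.congr ((ae_restrict_mem measurableSet_Ioo).mono hleft), ?_⟩
  rw [← setIntegral_congr_fun measurableSet_Ioo hleft,
    ← setIntegral_congr_fun measurableSet_Ioo hright]
  exact integral_integral_swap (f := fun t s => f (t, s)) hf_int

end TriangleFubini

section RightFracInt

variable {β γ x : ℝ} {f f' g ψ : ℝ → ℝ}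

lemma rightFracInt_eq_setIntegral (hx : x ≤ 1) :
    rightFracInt γ f x = 1 / Real.Gamma γ * ∫ t in Ioo x 1, (t - x) ^ (γ - 1) * f t := by
  rw [rightFracInt, intervalIntegral.integral_of_le hx, integral_Ioc_eq_integral_Ioo]

lemma rightFracInt_one : rightFracInt 1 f x = ∫ t in x..1, f t := by
  simp [rightFracInt]

lemma rightFracInt_neg : rightFracInt γ (fun t => -f t) x = -rightFracInt γ f x := by
  simp [rightFracInt, intervalIntegral.integral_neg]

lemma rightFracInt_congr_ae (hx : x ≤ 1) (h : f =ᵐ[volume.restrict (Ioo x 1)] f') :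
    rightFracInt γ f x = rightFracInt γ f' x := by
  rw [rightFracInt_eq_setIntegral hx, rightFracInt_eq_setIntegral hx]
  congr 1
  exact integral_congr_ae (h.mono fun t ht => by simp only [ht])

lemma integrableOn_and_integral_sub_rpow_mul_rightFracInt (hβ : 0 < β) (hγ : 0 < γ)
    (hβγ : 1 ≤ β + γ) (hx : x ≤ 1) (hg : IntegrableOn g (Ioo x 1)) :
    IntegrableOn (fun t => (t - x) ^ (β - 1) * rightFracInt γ g t) (Ioo x 1) ∧
      ∫ t in Ioo x 1, (t - x) ^ (β - 1) * rightFracInt γ g t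
        = Real.Gamma β * rightFracInt (β + γ) g x := by
  set B := Real.Gamma β * Real.Gamma γ / Real.Gamma (β + γ)
  have hinner : ∀ s ∈ Ioo x 1, (∫ t in Ioo x s, (t - x) ^ (β - 1) * (s - t) ^ (γ - 1)) * g s
      = B * ((s - x) ^ (β + γ - 1) * g s) := fun s hs => by
    rw [integral_Ioo_sub_rpow_mul_rpow_sub hβ hγ hs.1, mul_assoc]
  have hbound : IntegrableOn (fun s => (s - x) ^ (β + γ - 1) * g s) (Ioo x 1) := by
    refine hg.bdd_mul (c := (1 - x) ^ (β + γ - 1))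
      (Measurable.aestronglyMeasurable (by fun_prop)) ?_
    filter_upwards [ae_restrict_mem measurableSet_Ioo] with s hs
    rw [Real.norm_of_nonneg (Real.rpow_nonneg (sub_pos.2 hs.1).le _)]
    exact Real.rpow_le_rpow (sub_pos.2 hs.1).le (by linarith [hs.2]) (by linarith)
  obtain ⟨hint, hswap⟩ := integral_Ioo_integral_Ioo_swap
    (w := fun t s => (t - x) ^ (β - 1) * (s - t) ^ (γ - 1)) (by fun_prop)
    (fun t s hxt hts => mul_nonneg (Real.rpow_nonneg (sub_pos.2 hxt).le _)
      (Real.rpow_nonneg (sub_pos.2 hts).le _))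
    (fun s _ => integrableOn_sub_rpow_mul_rpow_sub_Ioo (by linarith) (by linarith) x s)
    hg.aestronglyMeasurable
    (IntegrableOn.congr_fun (hbound.const_mul B) (fun s hs => (hinner s hs).symm)
      measurableSet_Ioo)
  have hfrac : ∀ t ∈ Ioo x 1, (t - x) ^ (β - 1) * rightFracInt γ g t
      = 1 / Real.Gamma γ * ∫ s in Ioo t 1, (t - x) ^ (β - 1) * (s - t) ^ (γ - 1) * g s :=
    fun t ht => by
      rw [rightFracInt_eq_setIntegral ht.2.le, ← integral_const_mul, ← integral_const_mul,
        ← integral_const_mul]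
      refine setIntegral_congr_fun measurableSet_Ioo fun s _ => ?_
      ring
  refine ⟨IntegrableOn.congr_fun (hint.const_mul _) (fun t ht => (hfrac t ht).symm)
    measurableSet_Ioo, ?_⟩
  rw [setIntegral_congr_fun measurableSet_Ioo hfrac, integral_const_mul, hswap,
    setIntegral_congr_fun measurableSet_Ioo hinner, integral_const_mul,
    rightFracInt_eq_setIntegral hx]
  have := (Real.Gamma_pos_of_pos hγ).ne'
  have := (Real.Gamma_pos_of_pos (add_pos hβ hγ)).ne'
  simp only [B]
  field_simp

theorem rightFracInt_rightFracInt (hβ : 0 < β) (hγ : 0 < γ) (hβγ : 1 ≤ β + γ) (hx : x ≤ 1)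
    (hg : IntegrableOn g (Ioo x 1)) :
    rightFracInt β (rightFracInt γ g) x = rightFracInt (β + γ) g x := by
  rw [rightFracInt_eq_setIntegral hx,
    (integrableOn_and_integral_sub_rpow_mul_rightFracInt hβ hγ hβγ hx hg).2]
  field_simp [(Real.Gamma_pos_of_pos hβ).ne']

lemma integrableOn_rightFracInt (hγ : 0 < γ) (hx : x ≤ 1) (hg : IntegrableOn g (Ioo x 1)) :
    IntegrableOn (rightFracInt γ g) (Ioo x 1) := by
  simpa using (integrableOn_and_integral_sub_rpow_mul_rightFracInt one_pos hγ (by linarith) hx hg).1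

lemma ae_hasDerivAt_of_eq_neg_intervalIntegral {a b : ℝ} {F R : ℝ → ℝ}
    (hR : IntegrableOn R (Ioo a b)) (hF : ∀ x ∈ Ioo a b, F x = -∫ t in x..b, R t) :
    ∀ᵐ t ∂volume.restrict (Ioo a b), HasDerivAt F (R t) t := by
  rcases le_total a b with hab | hba
  · filter_upwards [ae_restrict_mem measurableSet_Ioo, ae_restrict_of_ae
      ((intervalIntegrable_iff_integrableOn_Ioo_of_le hab).2 hR).ae_hasDerivAt_integral]
      with t ht hderiv
    refine (hderiv (uIcc_of_le hab ▸ Ioo_subset_Icc_self ht) b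
      right_mem_uIcc).congr_of_eventuallyEq ?_
    filter_upwards [isOpen_Ioo.mem_nhds ht] with y hy
    rw [hF y hy, intervalIntegral.integral_symm, neg_neg]
  · simp [Ioo_eq_empty_of_le hba]

lemma eq_neg_rightFracInt_one_of_eq_intervalIntegral (hg : IntegrableOn g (Ioo 0 1))
    (hψ : ∀ x ∈ Icc (0:ℝ) 1, ψ x = ∫ t in (0:ℝ)..x, g t) (hψ1 : ψ 1 = 0) :
    ∀ x ∈ Icc (0:ℝ) 1, ψ x = -rightFracInt 1 g x := by
  intro x hx
  have hsplit := intervalIntegral.integral_add_adjacent_intervals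
    ((intervalIntegrable_iff_integrableOn_Ioo_of_le hx.1).2
      (hg.mono_set (Ioo_subset_Ioo_right hx.2)))
    ((intervalIntegrable_iff_integrableOn_Ioo_of_le hx.2).2
      (hg.mono_set (Ioo_subset_Ioo_left hx.1)))
  rw [rightFracInt_one, hψ x hx]
  rw [← hψ 1 (by simp), hψ1] at hsplit
  linarith

theorem rightFracInt_neg_deriv_rightFracInt (hγ : γ ∈ Ioo 0 1)
    (hg : IntegrableOn g (Ioo 0 1)) (hψ : ∀ x ∈ Icc (0:ℝ) 1, ψ x = -rightFracInt 1 g x) :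
    ∀ x ∈ Icc (0:ℝ) 1, rightFracInt (1 - γ) (fun y => -deriv (rightFracInt γ ψ) y) x = ψ x := by
  have hgx {x : ℝ} (hx : 0 ≤ x) : IntegrableOn g (Ioo x 1) := hg.mono_set (Ioo_subset_Ioo_left hx)
  have hF : ∀ x ∈ Ioo (0:ℝ) 1, rightFracInt γ ψ x = -∫ t in x..1, rightFracInt γ g t := by
    intro x hx
    have hψx : ψ =ᵐ[volume.restrict (Ioo x 1)] fun t => -rightFracInt 1 g t :=
      (ae_restrict_mem measurableSet_Ioo).mono fun t ht => hψ t ⟨(hx.1.trans ht.1).le, ht.2.le⟩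
    rw [rightFracInt_congr_ae hx.2.le hψx, rightFracInt_neg,
      rightFracInt_rightFracInt hγ.1 one_pos (by linarith [hγ.1]) hx.2.le (hgx hx.1.le),
      add_comm, ← rightFracInt_rightFracInt one_pos hγ.1 (by linarith [hγ.1]) hx.2.le
        (hgx hx.1.le),
      rightFracInt_one]
  have hderiv := ae_hasDerivAt_of_eq_neg_intervalIntegral
    (integrableOn_rightFracInt hγ.1 zero_le_one hg) hF
  intro x hx
  have hderiv_x : (fun y => -deriv (rightFracInt γ ψ) y)
      =ᵐ[volume.restrict (Ioo x 1)] fun y => -rightFracInt γ g y :=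
    (ae_restrict_of_ae_restrict_of_subset (Ioo_subset_Ioo_left hx.1) hderiv).mono
      fun t ht => by simp only [ht.deriv]
  rw [rightFracInt_congr_ae hx.2 hderiv_x, rightFracInt_neg,
    rightFracInt_rightFracInt (by linarith [hγ.2]) hγ.1 (by linarith) hx.2 (hgx hx.1),
    sub_add_cancel, hψ x hx]

end RightFracInt

section Boundedness

open scoped ENNReal

variable {Ω : Type*} [MeasurableSpace Ω] {μ : Measure Ω}

lemma eLpNorm_sub_const_le [IsProbabilityMeasure μ] {p : ℝ≥0∞} (hp : 1 ≤ p) {f : Ω → ℝ}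
    (hf : AEStronglyMeasurable f μ) (c : ℝ) :
    eLpNorm (fun x => f x - c) p μ ≤ eLpNorm f p μ + ‖c‖ₑ := by
  refine (eLpNorm_sub_le hf aestronglyMeasurable_const hp).trans_eq ?_
  rw [eLpNorm_const c (by positivity) (IsProbabilityMeasure.ne_zero μ), measure_univ,
    ENNReal.one_rpow, mul_one]

lemma enorm_integral_mul_le_eLpNorm_mul_eLpNorm {w f : Ω → ℝ} (hw : AEStronglyMeasurable w μ)
    (hf : AEStronglyMeasurable f μ) :
    ‖∫ x, w x * f x ∂μ‖ₑ ≤ eLpNorm w 2 μ * eLpNorm f 2 μ := by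
  have hHolder := eLpNorm_smul_le_mul_eLpNorm (p := 2) (q := 2) (r := 1) hf hw
  refine (enorm_integral_le_lintegral_enorm _).trans ?_
  rwa [← eLpNorm_one_eq_lintegral_enorm]

instance : IsProbabilityMeasure (volume.restrict (Ioo (0:ℝ) 1)) :=
  ⟨by rw [Measure.restrict_apply_univ, Real.volume_Ioo, sub_zero, ENNReal.ofReal_one]⟩

lemma memLp_two_rpow_Ioo {r : ℝ} (hr : -1 / 2 < r) :
    MemLp (fun t : ℝ => t ^ r) 2 (volume.restrict (Ioo 0 1)) := by
  rw [memLp_two_iff_integrable_sq (Measurable.aestronglyMeasurable (by fun_prop))]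
  have h2r : IntegrableOn (fun t : ℝ => t ^ (2 * r)) (Ioo 0 1) := by
    simpa using integrableOn_sub_rpow_Ioo (r := 2 * r) (by linarith) 0 1
  refine h2r.congr_fun (fun t ht => ?_) measurableSet_Ioo
  rw [← Real.rpow_natCast, ← Real.rpow_mul ht.1.le]
  ring_nf

theorem eLpNorm_PV_le {α : ℝ} (hα : 3 / 2 < α) : ∃ c : ℝ, 0 < c ∧ ∀ ψ : ℝ → ℝ,
    MemLp ψ 2 (volume.restrict (Ioo (0:ℝ) 1)) →
    eLpNorm (PV α ψ) 2 (volume.restrict (Ioo (0:ℝ) 1))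
      ≤ ENNReal.ofReal c * eLpNorm ψ 2 (volume.restrict (Ioo (0:ℝ) 1)) := by
  set μ := volume.restrict (Ioo (0:ℝ) 1)
  have hw : MemLp (fun t : ℝ => t ^ (α - 2)) 2 μ := memLp_two_rpow_Ioo (by linarith)
  set K := |Real.Gamma α / Real.Gamma (α - 1)|
  refine ⟨1 + K * (eLpNorm (fun t : ℝ => t ^ (α - 2)) 2 μ).toReal, by positivity,
    fun ψ hψ => ?_⟩
  have hPV : Real.Gamma α * rightFracInt (α - 1) ψ 0
      = Real.Gamma α / Real.Gamma (α - 1) * ∫ t, t ^ (α - 2) * ψ t ∂μ := by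
    rw [rightFracInt_eq_setIntegral zero_le_one]
    simp only [sub_zero, show α - 1 - 1 = α - 2 by ring]
    ring
  calc eLpNorm (PV α ψ) 2 μ ≤ eLpNorm ψ 2 μ + ‖Real.Gamma α * rightFracInt (α - 1) ψ 0‖ₑ :=
        eLpNorm_sub_const_le one_le_two hψ.1 _
    _ ≤ eLpNorm ψ 2 μ + ENNReal.ofReal K * (eLpNorm (fun t : ℝ => t ^ (α - 2)) 2 μ
          * eLpNorm ψ 2 μ) := by
        rw [hPV, enorm_mul, Real.enorm_eq_ofReal_abs]
        gcongr
        exact enorm_integral_mul_le_eLpNorm_mul_eLpNorm hw.1 hψ.1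
    _ = ENNReal.ofReal (1 + K * (eLpNorm (fun t : ℝ => t ^ (α - 2)) 2 μ).toReal)
          * eLpNorm ψ 2 μ := by
        rw [ENNReal.ofReal_add zero_le_one (by positivity), ENNReal.ofReal_mul (abs_nonneg _),
          ENNReal.ofReal_toReal hw.eLpNorm_ne_top, ENNReal.ofReal_one]
        ring

end Boundedness

/-- For `α ∈ (3/2,2)`: `P_V` is bounded on `L²(0,1)`, and for absolutely continuous
`ψ` with `ψ(0) = ψ(1) = 0` and `ψ' ∈ L²`, the function `φ = ᴿD₁^{α-1} ψ` satisfies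
`P_V φ = φ`. -/
theorem PV_bounded_and_fixes (α : ℝ) (hα : α ∈ Set.Ioo (3/2 : ℝ) 2) :
    (∃ c : ℝ, 0 < c ∧ ∀ ψ : ℝ → ℝ,
      MemLp ψ 2 (volume.restrict (Set.Ioo (0:ℝ) 1)) →
      eLpNorm (PV α ψ) 2 (volume.restrict (Set.Ioo (0:ℝ) 1))
        ≤ ENNReal.ofReal c * eLpNorm ψ 2 (volume.restrict (Set.Ioo (0:ℝ) 1))) ∧
    (∀ ψ g : ℝ → ℝ,
      MemLp g 2 (volume.restrict (Set.Ioo (0:ℝ) 1)) →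
      (∀ x ∈ Set.Icc (0:ℝ) 1, ψ x = ∫ t in (0:ℝ)..x, g t) →
      ψ 0 = 0 → ψ 1 = 0 →
      ∀ x, PV α (fun y => - deriv (rightFracInt (2 - α) ψ) y) x
            = - deriv (rightFracInt (2 - α) ψ) x) := by
  refine ⟨eLpNorm_PV_le hα.1, fun ψ g hg hψ hψ0 hψ1 x => ?_⟩
  have hγ : 2 - α ∈ Ioo (0:ℝ) 1 := ⟨by linarith [hα.2], by linarith [hα.1]⟩
  have hg_int : IntegrableOn g (Ioo 0 1) := hg.integrable one_le_two
  have hfix := rightFracInt_neg_deriv_rightFracInt hγ hg_int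
    (eq_neg_rightFracInt_one_of_eq_intervalIntegral hg_int hψ hψ1) 0 ⟨le_rfl, zero_le_one⟩
  rw [show 1 - (2 - α) = α - 1 by ring, hψ0] at hfix
  rw [PV, hfix, mul_zero, sub_zero]
end

section
/- Let α ∈ (3/2,2), δ = α−1 and f ∈ L²(0,1). The function w(x) = −(ₓI₁^α f)(x) + (ₓI₁^α f)(0)·(1−x)^{α−1} satisfies w(0) = 0, w(1) = 0, and ᴿD₁^α w = −f in the distributional sense, where ᴿD₁^α w = (d²/dx²)(ₓI₁^{2−α} w). -/
open MeasureTheory Set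

section AuxLemmas
open Function

lemma intInt_eq_Ioo (f : ℝ → ℝ) {a b : ℝ} (h : a ≤ b) :
    ∫ t in a..b, f t = ∫ t in Ioo a b, f t := by
  rw [intervalIntegral.integral_of_le h, ← Measure.restrict_congr_set Ioo_ae_eq_Ioc]

lemma rpowShiftII {x y : ℝ} (r : ℝ) (hr : -1 < r) :
    IntervalIntegrable (fun t => (t - x) ^ r) volume x y := by
  have := (intervalIntegral.intervalIntegrable_rpow' (a := 0) (b := y - x) hr).comp_sub_right x
  simpa using this

variable {α : ℝ} {g : ℝ → ℝ}

lemma kerInt (hα1 : 1 < α) (hgm : StronglyMeasurable g) (hgi : Integrable g)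
    {t : ℝ} (ht : t ∈ Icc (0:ℝ) 1) :
    IntegrableOn (fun s => (s - t) ^ (α - 1) * g s) (Ioc t 1) volume := by
  apply Integrable.mono hgi.restrict
  · have hg := hgm.measurable
    apply Measurable.aestronglyMeasurable
    fun_prop
  · filter_upwards [ae_restrict_mem measurableSet_Ioc] with s hs
    have h0 : (0:ℝ) ≤ s - t := by linarith [hs.1.le]
    have h1 : s - t ≤ 1 := by linarith [hs.2, ht.1]
    rw [Real.norm_eq_abs, Real.norm_eq_abs, abs_mul,
      abs_of_nonneg (Real.rpow_nonneg h0 _)]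
    calc (s-t) ^ (α-1) * |g s| ≤ 1 * |g s| :=
          mul_le_mul_of_nonneg_right (Real.rpow_le_one h0 h1 (by linarith)) (abs_nonneg _)
      _ = |g s| := one_mul _

lemma IalphaBound (hα1 : 1 < α) (hgm : StronglyMeasurable g) (hgi : Integrable g)
    {t : ℝ} (ht : t ∈ Icc (0:ℝ) 1) :
    |∫ s in t..1, (s - t) ^ (α - 1) * g s| ≤ ∫ s, |g s| := by
  refine (intervalIntegral.abs_integral_le_integral_abs ht.2).trans ?_
  have h2 : ∫ s in t..1, |(s - t) ^ (α - 1) * g s| ≤ ∫ s in t..1, |g s| := by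
    apply intervalIntegral.integral_mono_on ht.2
    · exact (intervalIntegrable_iff_integrableOn_Ioc_of_le ht.2).mpr (kerInt hα1 hgm hgi ht).abs
    · exact hgi.abs.intervalIntegrable
    · intro s hs
      have h0 : (0:ℝ) ≤ s - t := by linarith [hs.1]
      have h1 : s - t ≤ 1 := by linarith [hs.2, ht.1]
      rw [abs_mul, abs_of_nonneg (Real.rpow_nonneg h0 _)]
      calc (s-t) ^ (α-1) * |g s| ≤ 1 * |g s| :=
            mul_le_mul_of_nonneg_right (Real.rpow_le_one h0 h1 (by linarith)) (abs_nonneg _)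
        _ = |g s| := one_mul _
  refine h2.trans ?_
  rw [intervalIntegral.integral_of_le ht.2]
  exact setIntegral_le_integral hgi.abs (Filter.Eventually.of_forall fun s => abs_nonneg _)

lemma IoiInterIoo {t x : ℝ} (hx : x ≤ t) : Ioi t ∩ Ioo x 1 = Ioo t 1 := by
  ext s
  simp only [mem_inter_iff, mem_Ioi, mem_Ioo]
  exact ⟨fun ⟨h1, _, h3⟩ => ⟨h1, h3⟩, fun ⟨h1, h2⟩ => ⟨h1, lt_of_le_of_lt hx h1, h2⟩⟩

lemma Imeas (hgm : StronglyMeasurable g) :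
    ∃ h : ℝ → ℝ, StronglyMeasurable h ∧
      ∀ t ∈ Icc (0:ℝ) 1, (∫ s in t..1, (s - t) ^ (α - 1) * g s) = h t := by
  refine ⟨fun t => ∫ s, (if t < s then (s - t) ^ (α - 1) * g s else 0)
      ∂(volume.restrict (Ioo 0 1)), ?_, ?_⟩
  · apply StronglyMeasurable.integral_prod_right
      (f := fun t s => if t < s then (s - t) ^ (α - 1) * g s else 0)
    apply Measurable.stronglyMeasurable
    apply Measurable.ite (measurableSet_lt measurable_fst measurable_snd) _ measurable_const
    have hg := hgm.measurable
    fun_prop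
  · intro t ht
    show _ = ∫ s in Ioo (0:ℝ) 1, (if t < s then (s - t) ^ (α - 1) * g s else 0)
    have e1 : (fun s => if t < s then (s - t) ^ (α - 1) * g s else 0)
        = (Ioi t).indicator (fun s => (s - t) ^ (α - 1) * g s) := by
      ext s; by_cases h : t < s <;> simp [Set.indicator_apply, mem_Ioi, h]
    rw [e1, MeasureTheory.integral_indicator measurableSet_Ioi,
      Measure.restrict_restrict measurableSet_Ioi, IoiInterIoo ht.1]
    exact intInt_eq_Ioo _ ht.2

lemma parts_step (φ : ℝ → ℝ) (hφ : ContDiff ℝ (⊤ : ℕ∞) φ) (hsupp : tsupport φ ⊆ Set.Ioo (0:ℝ) 1)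
    (s : ℝ) :
    ∫ x in (0:ℝ)..s, (s - x) * deriv (deriv φ) x = φ s := by
  have hφ' : ContDiff ℝ (↑(⊤:ℕ∞)) φ := hφ.of_le (by simp)
  have hφd : Differentiable ℝ φ := (contDiff_infty_iff_deriv.mp hφ').1
  have hφ1 : Differentiable ℝ (deriv φ) :=
    (contDiff_infty_iff_deriv.mp (contDiff_infty_iff_deriv.mp hφ').2).1
  have hφ''c : Continuous (deriv (deriv φ)) :=
    (contDiff_infty_iff_deriv.mp (contDiff_infty_iff_deriv.mp hφ').2).2.continuous
  have hφ0 : φ 0 = 0 := image_eq_zero_of_notMem_tsupport (fun h => lt_irrefl 0 (hsupp h).1)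
  have hd0 : deriv φ 0 = 0 := by
    apply image_eq_zero_of_notMem_tsupport
    intro h
    exact lt_irrefl 0 ((hsupp (closure_minimal support_deriv_subset (isClosed_tsupport φ) h)).1)
  have h := intervalIntegral.integral_mul_deriv_eq_deriv_mul (a := 0) (b := s)
    (u := fun x => s - x) (u' := fun _ => (-1 : ℝ)) (v := deriv φ) (v' := deriv (deriv φ))
    (fun x _ => (hasDerivAt_id x).const_sub s)
    (fun x _ => (hφ1 x).hasDerivAt)
    intervalIntegrable_const
    (hφ''c.intervalIntegrable _ _)
  rw [h]
  have h2 : ∫ x in (0:ℝ)..s, (-1 : ℝ) * deriv φ x = -(φ s - φ 0) := by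
    rw [← intervalIntegral.integral_deriv_eq_sub (fun x _ => (hφd x))
      (hφ1.continuous.intervalIntegrable _ _), ← intervalIntegral.integral_neg]
    apply intervalIntegral.integral_congr
    intro x _
    ring
  rw [h2, hφ0, hd0]
  ring

lemma myRealBeta {a b : ℝ} (ha : 0 < a) (hb : 0 < b) :
    ∫ u in (0:ℝ)..1, u ^ (a-1) * (1-u) ^ (b-1)
      = Real.Gamma a * Real.Gamma b / Real.Gamma (a+b) := by
  have h := Complex.Gamma_mul_Gamma_eq_betaIntegral (s := (a:ℂ)) (t := (b:ℂ))
      (by simpa using ha) (by simpa using hb)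
  have hbeta : Complex.betaIntegral (a:ℂ) (b:ℂ)
      = ((∫ u in (0:ℝ)..1, u ^ (a-1) * (1-u) ^ (b-1) : ℝ) : ℂ) := by
    rw [Complex.betaIntegral, ← intervalIntegral.integral_ofReal]
    apply intervalIntegral.integral_congr
    intro x hx
    rw [uIcc_of_le (by norm_num : (0:ℝ) ≤ 1)] at hx
    have hx0 : (0:ℝ) ≤ x := hx.1
    have hx1 : (0:ℝ) ≤ 1 - x := by linarith [hx.2]
    simp only [Complex.ofReal_mul, Complex.ofReal_cpow hx0, Complex.ofReal_cpow hx1,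
      Complex.ofReal_sub, Complex.ofReal_one]
  rw [hbeta, ← Complex.ofReal_add, Complex.Gamma_ofReal, Complex.Gamma_ofReal,
    Complex.Gamma_ofReal, ← Complex.ofReal_mul, ← Complex.ofReal_mul] at h
  have h3 : Real.Gamma a * Real.Gamma b
      = Real.Gamma (a+b) * ∫ u in (0:ℝ)..1, u ^ (a-1) * (1-u) ^ (b-1) := by
    exact_mod_cast h
  have hGab : Real.Gamma (a+b) ≠ 0 := (Real.Gamma_pos_of_pos (by linarith)).ne'
  field_simp
  linarith [h3]

lemma myBetaScaled {a b x s : ℝ} (ha : 0 < a) (hb : 0 < b) (hxs : x < s) :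
    ∫ t in x..s, (t-x) ^ (a-1) * (s-t) ^ (b-1)
      = Real.Gamma a * Real.Gamma b / Real.Gamma (a+b) * ((s-x) ^ (a-1) * (s-x) ^ (b-1) * (s-x)) := by
  have hc : (0:ℝ) < s - x := by linarith
  have h1 := intervalIntegral.integral_comp_sub_right
      (a := x) (b := s) (fun u => u ^ (a-1) * (s-x-u) ^ (b-1)) x
  rw [sub_self] at h1
  have h1' : ∫ t in x..s, (t-x) ^ (a-1) * (s-t) ^ (b-1)
      = ∫ u in (0:ℝ)..(s-x), u ^ (a-1) * (s-x-u) ^ (b-1) := by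
    rw [← h1]
    apply intervalIntegral.integral_congr
    intro t _
    show (t-x) ^ (a-1) * (s-t) ^ (b-1) = (t-x) ^ (a-1) * (s-x-(t-x)) ^ (b-1)
    have e : s - x - (t-x) = s - t := by ring
    rw [e]
  have h2 : ∫ u in (0:ℝ)..(s-x), u ^ (a-1) * (s-x-u) ^ (b-1)
      = (s-x) • ∫ v in (0:ℝ)..1, ((s-x)*v) ^ (a-1) * (s-x-(s-x)*v) ^ (b-1) := by
    rw [intervalIntegral.integral_comp_mul_left (fun u => u ^ (a-1) * (s-x-u) ^ (b-1)) hc.ne',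
      mul_zero, mul_one, smul_smul, mul_inv_cancel₀ hc.ne', one_smul]
  have h3 : ∫ v in (0:ℝ)..1, ((s-x)*v) ^ (a-1) * (s-x-(s-x)*v) ^ (b-1)
      = (s-x) ^ (a-1) * (s-x) ^ (b-1) * ∫ v in (0:ℝ)..1, v ^ (a-1) * (1-v) ^ (b-1) := by
    rw [← intervalIntegral.integral_const_mul]
    apply intervalIntegral.integral_congr
    intro v hv
    rw [uIcc_of_le (by norm_num : (0:ℝ) ≤ 1)] at hv
    have hv0 : (0:ℝ) ≤ v := hv.1
    have hv1 : (0:ℝ) ≤ 1 - v := by linarith [hv.2]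
    show ((s-x)*v) ^ (a-1) * (s-x-(s-x)*v) ^ (b-1)
      = (s-x) ^ (a-1) * (s-x) ^ (b-1) * (v ^ (a-1) * (1-v) ^ (b-1))
    have e1 : s - x - (s-x)*v = (s-x) * (1-v) := by ring
    rw [e1, Real.mul_rpow hc.le hv0, Real.mul_rpow hc.le hv1]
    ring
  rw [h1', h2, h3, myRealBeta ha hb, smul_eq_mul]
  ring

lemma myBetaScaled2 {a b x s : ℝ} (ha : 0 < a) (hb : 0 < b) (hab : a + b = 2) (hxs : x < s) :
    ∫ t in x..s, (t-x) ^ (a-1) * (s-t) ^ (b-1)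
      = Real.Gamma a * Real.Gamma b * (s-x) := by
  have hc : (0:ℝ) < s - x := by linarith
  rw [myBetaScaled ha hb hxs, hab, Real.Gamma_two]
  have h4 : (s-x) ^ (a-1) * (s-x) ^ (b-1) * (s-x) = s-x := by
    nth_rewrite 3 [← Real.rpow_one (s-x)]
    rw [← Real.rpow_add hc, ← Real.rpow_add hc]; rw [
      show a - 1 + (b - 1) + 1 = 1 by linarith, Real.rpow_one]
  rw [h4]
  ring

lemma semigroup_step (hα1 : 3/2 < α) (hα2 : α < 2)
    (hgm : StronglyMeasurable g) (hgi : Integrable g)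
    {x : ℝ} (hx0 : 0 ≤ x) (hx1 : x < 1) :
    ∫ t in x..1, (t - x) ^ (1 - α) * rightFracInt α g t
      = Real.Gamma (2 - α) * ∫ s in x..1, (s - x) * g s := by
  have hΓα : 0 < Real.Gamma α := Real.Gamma_pos_of_pos (by linarith)
  have hΓ2α : 0 < Real.Gamma (2 - α) := Real.Gamma_pos_of_pos (by linarith)
  set μx := volume.restrict (Ioo x 1) with hμx
  set K : ℝ → ℝ → ℝ :=
    fun t s => if t < s then (t - x) ^ (1 - α) * ((s - t) ^ (α - 1) * g s) else 0 with hK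
  have hKmeas : AEStronglyMeasurable (uncurry K) (μx.prod μx) := by
    apply Measurable.aestronglyMeasurable
    apply Measurable.ite (measurableSet_lt measurable_fst measurable_snd) _ measurable_const
    have hg := hgm.measurable
    fun_prop
  have hsecEq : ∀ t, K t = fun s =>
      (t - x) ^ (1 - α) * ((Ioi t).indicator (fun s => (s - t) ^ (α - 1) * g s) s) := by
    intro t
    ext s
    by_cases h : t < s <;> simp [hK, Set.indicator_apply, mem_Ioi, h]
  have hsec : ∀ t ∈ Ioo x 1, Integrable (K t) μx := by
    intro t ht
    rw [hsecEq t]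
    apply Integrable.const_mul
    rw [hμx, integrable_indicator_iff measurableSet_Ioi, IntegrableOn,
      Measure.restrict_restrict measurableSet_Ioi, IoiInterIoo ht.1.le]
    exact ((kerInt (by linarith) hgm hgi ⟨by linarith [ht.1], ht.2.le⟩).mono_set
      Ioo_subset_Ioc_self)
  have hnormint : Integrable (fun t => ∫ s, ‖K t s‖ ∂μx) μx := by
    apply Integrable.mono' (g := fun t => (∫ s, |g s|) * (t - x) ^ (1 - α))
    · apply Integrable.const_mul
      have h2 : IntegrableOn (fun t => (t - x) ^ (1 - α)) (Ioc x 1) volume :=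
        (intervalIntegrable_iff_integrableOn_Ioc_of_le hx1.le).mp (rpowShiftII _ (by linarith))
      exact h2.mono_set Ioo_subset_Ioc_self
    · exact hKmeas.norm.integral_prod_right'
    · filter_upwards [ae_restrict_mem measurableSet_Ioo] with t ht
      have h0 : (0:ℝ) ≤ t - x := by linarith [ht.1]
      rw [Real.norm_of_nonneg (integral_nonneg (fun s => norm_nonneg _))]
      have step1 : ∫ s, ‖K t s‖ ∂μx ≤ ∫ s, (t - x) ^ (1 - α) * |g s| ∂μx := by
        apply integral_mono_of_nonneg (Filter.Eventually.of_forall fun s => norm_nonneg _)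
          ((hgi.abs.restrict).const_mul _)
        filter_upwards [ae_restrict_mem measurableSet_Ioo] with s hs
        by_cases h : t < s
        · simp only [hK, if_pos h, Real.norm_eq_abs]
          rw [abs_mul, abs_mul, abs_of_nonneg (Real.rpow_nonneg h0 _),
            abs_of_nonneg (Real.rpow_nonneg (by linarith : (0:ℝ) ≤ s - t) _)]
          have hle1 : (s - t) ^ (α - 1) ≤ 1 :=
            Real.rpow_le_one (by linarith) (by linarith [hs.2, ht.1, hx0]) (by linarith)
          calc (t-x) ^ (1-α) * ((s-t) ^ (α-1) * |g s|)
              ≤ (t-x) ^ (1-α) * (1 * |g s|) :=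
                mul_le_mul_of_nonneg_left
                  (mul_le_mul_of_nonneg_right hle1 (abs_nonneg _)) (Real.rpow_nonneg h0 _)
            _ = (t-x) ^ (1-α) * |g s| := by ring
        · simp only [hK, if_neg h, norm_zero]
          positivity
      refine step1.trans ?_
      rw [integral_const_mul, mul_comm ((t - x) ^ (1 - α)) _]
      apply mul_le_mul_of_nonneg_right _ (Real.rpow_nonneg h0 _)
      exact setIntegral_le_integral hgi.abs (Filter.Eventually.of_forall fun s => abs_nonneg _)
  have hKint : Integrable (uncurry K) (μx.prod μx) := by
    rw [integrable_prod_iff hKmeas]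
    constructor
    · filter_upwards [ae_restrict_mem measurableSet_Ioo] with t ht using hsec t ht
    · exact hnormint
  have hswap := integral_integral_swap hKint
  have hL : ∫ t, (∫ s, K t s ∂μx) ∂μx
      = ∫ t in x..1, (t - x) ^ (1 - α) * ∫ s in t..1, (s - t) ^ (α - 1) * g s := by
    rw [intInt_eq_Ioo _ hx1.le]
    apply setIntegral_congr_fun measurableSet_Ioo
    intro t ht
    show ∫ s, K t s ∂μx = (t - x) ^ (1 - α) * ∫ s in t..1, (s - t) ^ (α - 1) * g s
    rw [hsecEq t, integral_const_mul]
    congr 1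
    rw [hμx, MeasureTheory.integral_indicator measurableSet_Ioi,
      Measure.restrict_restrict measurableSet_Ioi, IoiInterIoo ht.1.le,
      ← intInt_eq_Ioo _ ht.2.le]
  have hR : ∫ s, (∫ t, K t s ∂μx) ∂μx
      = (Real.Gamma (2 - α) * Real.Gamma α) * ∫ s in x..1, (s - x) * g s := by
    have hpt : ∀ s ∈ Ioo x 1, (∫ t, K t s ∂μx)
        = (Real.Gamma (2 - α) * Real.Gamma α) * ((s - x) * g s) := by
      intro s hs
      show ∫ t, K t s ∂μx = (Real.Gamma (2 - α) * Real.Gamma α) * ((s - x) * g s)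
      have e1 : (fun t => K t s)
          = (Iio s).indicator (fun t => ((t - x) ^ (1 - α) * (s - t) ^ (α - 1)) * g s) := by
        ext t
        by_cases h : t < s <;> simp [hK, Set.indicator_apply, mem_Iio, h, mul_assoc]
      have e2 : Iio s ∩ Ioo x 1 = Ioo x s := by
        ext t
        simp only [mem_inter_iff, mem_Iio, mem_Ioo]
        exact ⟨fun ⟨h1, h2, _⟩ => ⟨h2, h1⟩, fun ⟨h1, h2⟩ => ⟨h2, h1, h2.trans hs.2⟩⟩
      rw [e1, hμx, MeasureTheory.integral_indicator measurableSet_Iio,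
        Measure.restrict_restrict measurableSet_Iio, e2, ← intInt_eq_Ioo _ hs.1.le,
        intervalIntegral.integral_mul_const]
      have hbeta : ∫ t in x..s, (t - x) ^ ((2-α) - 1) * (s - t) ^ (α - 1)
          = Real.Gamma (2-α) * Real.Gamma α * (s - x) :=
        myBetaScaled2 (by linarith) (by linarith) (by ring) hs.1
      have e3 : ∫ t in x..s, (t - x) ^ (1 - α) * (s - t) ^ (α - 1)
          = ∫ t in x..s, (t - x) ^ ((2-α) - 1) * (s - t) ^ (α - 1) := by
        apply intervalIntegral.integral_congr
        intro u _
        have e : (2:ℝ) - α - 1 = 1 - α := by ring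
        rw [e]
      rw [e3, hbeta]
      ring
    rw [hμx, setIntegral_congr_fun measurableSet_Ioo hpt, ← intInt_eq_Ioo _ hx1.le,
      intervalIntegral.integral_const_mul]
  have hstar : ∫ t in x..1, (t - x) ^ (1 - α) * ∫ s in t..1, (s - t) ^ (α - 1) * g s
      = (Real.Gamma (2 - α) * Real.Gamma α) * ∫ s in x..1, (s - x) * g s := by
    rw [← hL, ← hR]
    exact hswap
  have hrfi : ∫ t in x..1, (t - x) ^ (1 - α) * rightFracInt α g t
      = (1 / Real.Gamma α)
        * ∫ t in x..1, (t - x) ^ (1 - α) * ∫ s in t..1, (s - t) ^ (α - 1) * g s := by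
    rw [← intervalIntegral.integral_const_mul]
    apply intervalIntegral.integral_congr
    intro t _
    show (t - x) ^ (1 - α) * rightFracInt α g t
      = (1 / Real.Gamma α) * ((t - x) ^ (1 - α) * ∫ s in t..1, (s - t) ^ (α - 1) * g s)
    rw [rightFracInt]
    ring
  rw [hrfi, hstar]
  field_simp

lemma dist_step (hgm : StronglyMeasurable g) (hgi : Integrable g)
    (φ : ℝ → ℝ) (hφ : ContDiff ℝ (⊤ : ℕ∞) φ) (hsupp : tsupport φ ⊆ Set.Ioo (0:ℝ) 1) :
    ∫ x in (0:ℝ)..1, (∫ s in x..1, (s - x) * g s) * deriv (deriv φ) x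
      = ∫ s in (0:ℝ)..1, g s * φ s := by
  have hφ' : ContDiff ℝ (↑(⊤:ℕ∞)) φ := hφ.of_le (by simp)
  have hφ''c : Continuous (deriv (deriv φ)) :=
    (contDiff_infty_iff_deriv.mp (contDiff_infty_iff_deriv.mp hφ').2).2.continuous
  have hcs : HasCompactSupport φ :=
    IsCompact.of_isClosed_subset isCompact_Icc (isClosed_tsupport φ)
      (hsupp.trans Ioo_subset_Icc_self)
  have hcs'' : HasCompactSupport (deriv (deriv φ)) := (hcs.deriv).deriv
  obtain ⟨C, hC⟩ := hcs''.exists_bound_of_continuous hφ''c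
  have hC0 : 0 ≤ C := le_trans (norm_nonneg _) (hC 0)
  set μ0 := volume.restrict (Ioo (0:ℝ) 1) with hμ0
  set G : ℝ → ℝ → ℝ :=
    fun x s => (if x < s then (s - x) * g s else 0) * deriv (deriv φ) x with hG
  have hGmeas : AEStronglyMeasurable (uncurry G) (μ0.prod μ0) := by
    apply Measurable.aestronglyMeasurable
    apply Measurable.mul _ (hφ''c.measurable.comp measurable_fst)
    apply Measurable.ite (measurableSet_lt measurable_fst measurable_snd) _ measurable_const
    have hg := hgm.measurable
    fun_prop
  have hsecEq : ∀ x, G x = fun s =>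
      ((Ioi x).indicator (fun s => (s - x) * g s) s) * deriv (deriv φ) x := by
    intro x
    ext s
    by_cases h : x < s <;> simp [hG, Set.indicator_apply, mem_Ioi, h]
  have hker : ∀ x ∈ Ioo (0:ℝ) 1, IntegrableOn (fun s => (s - x) * g s) (Ioo x 1) volume := by
    intro x hx
    apply Integrable.mono hgi.restrict
    · have hg := hgm.measurable
      apply Measurable.aestronglyMeasurable
      fun_prop
    · filter_upwards [ae_restrict_mem measurableSet_Ioo] with s hs
      rw [Real.norm_eq_abs, Real.norm_eq_abs, abs_mul]
      have h0 : |s - x| ≤ 1 := by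
        rw [abs_of_nonneg (by linarith [hs.1] : (0:ℝ) ≤ s - x)]
        linarith [hs.2, hx.1]
      calc |s - x| * |g s| ≤ 1 * |g s| := mul_le_mul_of_nonneg_right h0 (abs_nonneg _)
        _ = |g s| := one_mul _
  have hsec : ∀ x ∈ Ioo (0:ℝ) 1, Integrable (G x) μ0 := by
    intro x hx
    rw [hsecEq x]
    apply Integrable.mul_const
    rw [hμ0, integrable_indicator_iff measurableSet_Ioi, IntegrableOn,
      Measure.restrict_restrict measurableSet_Ioi, IoiInterIoo hx.1.le]
    exact hker x hx
  have hnormint : Integrable (fun x => ∫ s, ‖G x s‖ ∂μ0) μ0 := by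
    apply Integrable.mono' (g := fun _ => (∫ s, |g s|) * C)
    · exact integrable_const _
    · exact hGmeas.norm.integral_prod_right'
    · filter_upwards [ae_restrict_mem measurableSet_Ioo] with x hx
      rw [Real.norm_of_nonneg (integral_nonneg (fun s => norm_nonneg _))]
      have step1 : ∫ s, ‖G x s‖ ∂μ0 ≤ ∫ s, |g s| * C ∂μ0 := by
        apply integral_mono_of_nonneg (Filter.Eventually.of_forall fun s => norm_nonneg _)
          (hgi.abs.restrict.mul_const _)
        filter_upwards [ae_restrict_mem measurableSet_Ioo] with s hs
        by_cases h : x < s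
        · simp only [hG, if_pos h, Real.norm_eq_abs, abs_mul]
          have h0 : |s - x| ≤ 1 := by
            rw [abs_of_nonneg (by linarith : (0:ℝ) ≤ s - x)]
            linarith [hs.2, hx.1]
          have h1 : |deriv (deriv φ) x| ≤ C := by simpa [Real.norm_eq_abs] using hC x
          calc |s - x| * |g s| * |deriv (deriv φ) x| ≤ 1 * |g s| * C := by
                apply mul_le_mul (mul_le_mul_of_nonneg_right h0 (abs_nonneg _)) h1
                  (abs_nonneg _)
                positivity
            _ = |g s| * C := by ring
        · simp only [hG, if_neg h, norm_zero, zero_mul]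
          positivity
      refine step1.trans ?_
      rw [MeasureTheory.integral_mul_const]
      apply mul_le_mul_of_nonneg_right _ hC0
      exact setIntegral_le_integral hgi.abs (Filter.Eventually.of_forall fun s => abs_nonneg _)
  have hGint : Integrable (uncurry G) (μ0.prod μ0) := by
    rw [integrable_prod_iff hGmeas]
    constructor
    · filter_upwards [ae_restrict_mem measurableSet_Ioo] with x hx using hsec x hx
    · exact hnormint
  have hswap := integral_integral_swap hGint
  have hL : ∫ x, (∫ s, G x s ∂μ0) ∂μ0
      = ∫ x in (0:ℝ)..1, (∫ s in x..1, (s - x) * g s) * deriv (deriv φ) x := by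
    rw [intInt_eq_Ioo _ (by norm_num : (0:ℝ) ≤ 1)]
    apply setIntegral_congr_fun measurableSet_Ioo
    intro x hx
    show ∫ s, G x s ∂μ0 = (∫ s in x..1, (s - x) * g s) * deriv (deriv φ) x
    rw [hsecEq x, MeasureTheory.integral_mul_const]
    congr 1
    rw [hμ0, MeasureTheory.integral_indicator measurableSet_Ioi,
      Measure.restrict_restrict measurableSet_Ioi, IoiInterIoo hx.1.le,
      ← intInt_eq_Ioo _ hx.2.le]
  have hR : ∫ s, (∫ x, G x s ∂μ0) ∂μ0 = ∫ s in (0:ℝ)..1, g s * φ s := by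
    rw [intInt_eq_Ioo _ (by norm_num : (0:ℝ) ≤ 1)]
    apply setIntegral_congr_fun measurableSet_Ioo
    intro s hs
    show ∫ x, G x s ∂μ0 = g s * φ s
    have e1 : (fun x => G x s)
        = (Iio s).indicator (fun x => ((s - x) * deriv (deriv φ) x) * g s) := by
      ext x
      by_cases h : x < s
      · simp only [hG, if_pos h, Set.indicator_apply, mem_Iio, if_pos h]
        ring
      · simp [hG, if_neg h, Set.indicator_apply, mem_Iio, h]
    have e2 : Iio s ∩ Ioo (0:ℝ) 1 = Ioo 0 s := by
      ext t
      simp only [mem_inter_iff, mem_Iio, mem_Ioo]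
      exact ⟨fun ⟨h1, h2, _⟩ => ⟨h2, h1⟩, fun ⟨h1, h2⟩ => ⟨h2, h1, h2.trans hs.2⟩⟩
    rw [e1, hμ0, MeasureTheory.integral_indicator measurableSet_Iio,
      Measure.restrict_restrict measurableSet_Iio, e2, ← intInt_eq_Ioo _ hs.1.le,
      intervalIntegral.integral_mul_const, parts_step φ hφ hsupp s]
    ring
  rw [← hL, ← hR]
  exact hswap

theorem mainKey (hα1 : 3/2 < α) (hα2 : α < 2)
    (hgm : StronglyMeasurable g) (hgi : Integrable g)
    (hgs : ∀ t, t ∉ Set.Ioo (0:ℝ) 1 → g t = 0)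
    (φ : ℝ → ℝ) (hφ : ContDiff ℝ (⊤ : ℕ∞) φ) (hsupp : tsupport φ ⊆ Set.Ioo (0:ℝ) 1)
    (w : ℝ → ℝ)
    (hw : ∀ t ∈ Icc (0:ℝ) 1, w t = - rightFracInt α g t
        + rightFracInt α g 0 * (1 - t) ^ (α - 1)) :
    ∫ x in (0:ℝ)..1, rightFracInt (2 - α) w x * deriv (deriv φ) x
      = ∫ x in (0:ℝ)..1, (- g x) * φ x := by
  have hΓα : 0 < Real.Gamma α := Real.Gamma_pos_of_pos (by linarith)
  have hΓ2α : 0 < Real.Gamma (2 - α) := Real.Gamma_pos_of_pos (by linarith)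
  have hφ' : ContDiff ℝ (↑(⊤:ℕ∞)) φ := hφ.of_le (by simp)
  have hφ''c : Continuous (deriv (deriv φ)) :=
    (contDiff_infty_iff_deriv.mp (contDiff_infty_iff_deriv.mp hφ').2).2.continuous
  set c := rightFracInt α g 0 with hc
  have e21 : (2:ℝ) - α - 1 = 1 - α := by ring
  obtain ⟨h, hhm, hheq⟩ := Imeas (α := α) hgm
  -- pointwise identity
  have hmain_pt : ∀ x ∈ Icc (0:ℝ) 1, rightFracInt (2 - α) w x
      = -(∫ s in x..1, (s - x) * g s) + (c * Real.Gamma α) * (1 - x) := by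
    intro x hx
    rcases eq_or_lt_of_le hx.2 with heq | hlt
    · rw [heq]
      simp [rightFracInt, intervalIntegral.integral_same]
    -- x < 1
    · have hrpowInt : IntegrableOn (fun t => (t - x) ^ (1 - α)) (Ioc x 1) volume :=
        (intervalIntegrable_iff_integrableOn_Ioc_of_le hlt.le).mp (rpowShiftII _ (by linarith))
      have hint2 : IntervalIntegrable (fun t => (t - x) ^ ((2-α)-1) * (1 - t) ^ (α - 1))
          volume x 1 := by
        rw [intervalIntegrable_iff_integrableOn_Ioc_of_le hlt.le]
        apply Integrable.mono hrpowInt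
        · apply Measurable.aestronglyMeasurable
          fun_prop
        · filter_upwards [ae_restrict_mem measurableSet_Ioc] with t ht
          have h0 : (0:ℝ) ≤ t - x := by linarith [ht.1]
          have h1 : (0:ℝ) ≤ 1 - t := by linarith [ht.2]
          rw [e21, Real.norm_eq_abs, Real.norm_eq_abs, abs_mul,
            abs_of_nonneg (Real.rpow_nonneg h0 _), abs_of_nonneg (Real.rpow_nonneg h1 _)]
          calc (t-x) ^ (1-α) * (1-t) ^ (α-1) ≤ (t-x) ^ (1-α) * 1 :=
                mul_le_mul_of_nonneg_left
                  (Real.rpow_le_one h1 (by linarith [ht.1, hx.1]) (by linarith))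
                  (Real.rpow_nonneg h0 _)
            _ = (t-x) ^ (1-α) := mul_one _
      have hint1 : IntervalIntegrable (fun t => (t - x) ^ ((2-α)-1) * rightFracInt α g t)
          volume x 1 := by
        rw [intervalIntegrable_iff_integrableOn_Ioc_of_le hlt.le]
        apply Integrable.mono' (g := fun t => ((1 / Real.Gamma α) * ∫ s, |g s|) * (t-x) ^ (1-α))
        · exact hrpowInt.const_mul _
        · have hmeas : AEStronglyMeasurable
              (fun t => (t - x) ^ ((2-α)-1) * ((1 / Real.Gamma α) * h t))
              (volume.restrict (Ioc x 1)) := by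
            apply Measurable.aestronglyMeasurable
            have hh := hhm.measurable
            fun_prop
          apply hmeas.congr
          filter_upwards [ae_restrict_mem measurableSet_Ioc] with t ht
          have ht01 : t ∈ Icc (0:ℝ) 1 := ⟨by linarith [ht.1, hx.1], ht.2⟩
          rw [rightFracInt, hheq t ht01]
        · filter_upwards [ae_restrict_mem measurableSet_Ioc] with t ht
          have ht01 : t ∈ Icc (0:ℝ) 1 := ⟨by linarith [ht.1, hx.1], ht.2⟩
          have h0 : (0:ℝ) ≤ t - x := by linarith [ht.1]
          rw [e21, Real.norm_eq_abs, abs_mul, abs_of_nonneg (Real.rpow_nonneg h0 _)]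
          have hbd : |rightFracInt α g t| ≤ (1 / Real.Gamma α) * ∫ s, |g s| := by
            rw [rightFracInt, abs_mul, abs_of_nonneg (by positivity : (0:ℝ) ≤ 1 / Real.Gamma α)]
            exact mul_le_mul_of_nonneg_left (IalphaBound (by linarith) hgm hgi ht01)
              (by positivity)
          calc (t-x) ^ (1-α) * |rightFracInt α g t|
              ≤ (t-x) ^ (1-α) * ((1 / Real.Gamma α) * ∫ s, |g s|) :=
                mul_le_mul_of_nonneg_left hbd (Real.rpow_nonneg h0 _)
            _ = ((1 / Real.Gamma α) * ∫ s, |g s|) * (t-x) ^ (1-α) := by ring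
      have hsplit : ∫ t in x..1, (t - x) ^ ((2-α)-1) * w t
          = (-1) * (∫ t in x..1, (t - x) ^ ((2-α)-1) * rightFracInt α g t)
            + c * ∫ t in x..1, (t - x) ^ ((2-α)-1) * (1 - t) ^ (α - 1) := by
        calc ∫ t in x..1, (t - x) ^ ((2-α)-1) * w t
            = ∫ t in x..1, ((-1) * ((t - x) ^ ((2-α)-1) * rightFracInt α g t)
                + c * ((t - x) ^ ((2-α)-1) * (1 - t) ^ (α - 1))) := by
              apply intervalIntegral.integral_congr
              intro t ht
              rw [uIcc_of_le hlt.le] at ht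
              have ht01 : t ∈ Icc (0:ℝ) 1 := ⟨by linarith [ht.1, hx.1], ht.2⟩
              show (t - x) ^ ((2-α)-1) * w t = _
              rw [hw t ht01]
              ring
          _ = (∫ t in x..1, (-1) * ((t - x) ^ ((2-α)-1) * rightFracInt α g t))
                + ∫ t in x..1, c * ((t - x) ^ ((2-α)-1) * (1 - t) ^ (α - 1)) :=
              intervalIntegral.integral_add (hint1.const_mul (-1)) (hint2.const_mul c)
          _ = _ := by
              rw [intervalIntegral.integral_const_mul, intervalIntegral.integral_const_mul]
      have hsg : ∫ t in x..1, (t - x) ^ ((2-α)-1) * rightFracInt α g t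
          = Real.Gamma (2 - α) * ∫ s in x..1, (s - x) * g s := by
        rw [show (fun t => (t - x) ^ ((2-α)-1) * rightFracInt α g t)
            = fun t => (t - x) ^ (1-α) * rightFracInt α g t by ext t; rw [e21]]
        exact semigroup_step hα1 hα2 hgm hgi hx.1 hlt
      have hbeta : ∫ t in x..1, (t - x) ^ ((2-α)-1) * (1 - t) ^ (α - 1)
          = Real.Gamma (2-α) * Real.Gamma α * (1 - x) :=
        myBetaScaled2 (by linarith) (by linarith) (by ring) hlt
      rw [rightFracInt, hsplit, hsg, hbeta]
      field_simp
  -- continuity of F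
  have hg1i : Integrable (fun s => s * g s) := by
    apply Integrable.mono hgi
    · have hg := hgm.measurable
      apply Measurable.aestronglyMeasurable
      fun_prop
    · apply Filter.Eventually.of_forall
      intro s
      by_cases hs : s ∈ Ioo (0:ℝ) 1
      · rw [Real.norm_eq_abs, Real.norm_eq_abs, abs_mul]
        calc |s| * |g s| ≤ 1 * |g s| :=
              mul_le_mul_of_nonneg_right
                (by rw [abs_of_nonneg hs.1.le]; linarith [hs.2]) (abs_nonneg _)
          _ = |g s| := one_mul _
      · rw [hgs s hs]
        simp
  have hFcont : Continuous (fun x => ∫ s in x..1, (s - x) * g s) := by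
    have e : (fun x => ∫ s in x..1, (s - x) * g s)
        = fun x => (∫ s in x..1, s * g s) - x * ∫ s in x..1, g s := by
      ext x
      rw [← intervalIntegral.integral_const_mul,
        ← intervalIntegral.integral_sub hg1i.intervalIntegrable
          (hgi.intervalIntegrable.const_mul x)]
      apply intervalIntegral.integral_congr
      intro s _
      show (s - x) * g s = s * g s - x * g s
      ring
    rw [e]
    have c1 : Continuous fun x => ∫ s in x..1, s * g s := by
      have hp := intervalIntegral.continuous_primitive (fun a b => hg1i.intervalIntegrable) 1
      have e2 : (fun x => ∫ s in x..1, s * g s) = fun x => -(∫ s in (1:ℝ)..x, s * g s) := by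
        ext x
        rw [intervalIntegral.integral_symm]
      rw [e2]
      exact hp.neg
    have c2 : Continuous fun x => ∫ s in x..1, g s := by
      have hp := intervalIntegral.continuous_primitive (fun a b => hgi.intervalIntegrable) 1
      have e2 : (fun x => ∫ s in x..1, g s) = fun x => -(∫ s in (1:ℝ)..x, g s) := by
        ext x
        rw [intervalIntegral.integral_symm]
      rw [e2]
      exact hp.neg
    exact c1.sub (continuous_id.mul c2)
  -- assemble
  have hsplit2 : ∫ x in (0:ℝ)..1, rightFracInt (2 - α) w x * deriv (deriv φ) x
      = (-1) * (∫ x in (0:ℝ)..1, (∫ s in x..1, (s - x) * g s) * deriv (deriv φ) x)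
        + (c * Real.Gamma α) * ∫ x in (0:ℝ)..1, (1 - x) * deriv (deriv φ) x := by
    calc ∫ x in (0:ℝ)..1, rightFracInt (2 - α) w x * deriv (deriv φ) x
        = ∫ x in (0:ℝ)..1, ((-1) * ((∫ s in x..1, (s - x) * g s) * deriv (deriv φ) x)
            + (c * Real.Gamma α) * ((1 - x) * deriv (deriv φ) x)) := by
          apply intervalIntegral.integral_congr
          intro x hx
          rw [uIcc_of_le (by norm_num : (0:ℝ) ≤ 1)] at hx
          show rightFracInt (2 - α) w x * deriv (deriv φ) x = _
          rw [hmain_pt x hx]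
          ring
      _ = (∫ x in (0:ℝ)..1, (-1) * ((∫ s in x..1, (s - x) * g s) * deriv (deriv φ) x))
            + ∫ x in (0:ℝ)..1, (c * Real.Gamma α) * ((1 - x) * deriv (deriv φ) x) :=
          intervalIntegral.integral_add
            (((hFcont.mul hφ''c).intervalIntegrable _ _).const_mul _)
            ((((continuous_const.sub continuous_id).mul hφ''c).intervalIntegrable _ _).const_mul _)
      _ = _ := by
          rw [intervalIntegral.integral_const_mul, intervalIntegral.integral_const_mul]
  have hone : ∫ x in (0:ℝ)..1, (1 - x) * deriv (deriv φ) x = 0 := by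
    have := parts_step φ hφ hsupp 1
    rw [this]
    exact image_eq_zero_of_notMem_tsupport (fun hmem => lt_irrefl 1 (hsupp hmem).2)
  rw [hsplit2, hone, dist_step hgm hgi φ hφ hsupp, mul_zero, add_zero]
  rw [show ∀ a : ℝ, (-1) * a = (-a) from fun a => by ring, ← intervalIntegral.integral_neg]
  apply intervalIntegral.integral_congr
  intro x _
  show -(g x * φ x) = -g x * φ x
  ring


end AuxLemmas

/-- Solution representation for the adjoint problem: for `α ∈ (3/2,2)` and
`f ∈ L²(0,1)`, `w = -ₓI₁^α f + (ₓI₁^α f)(0)·(1-x)^{α-1}` satisfies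
`w(0) = w(1) = 0` and `ᴿD₁^α w = -f` distributionally, where
`ᴿD₁^α w = (d²/dx²)(ₓI₁^{2-α} w)`. -/
theorem solRep_adjoint_RL (α : ℝ) (hα : α ∈ Set.Ioo (3/2 : ℝ) 2)
    (f : ℝ → ℝ) (hf : MemLp f 2 (volume.restrict (Set.Ioo (0:ℝ) 1)))
    (w : ℝ → ℝ)
    (hw : ∀ x, w x = - rightFracInt α f x
        + rightFracInt α f 0 * (1 - x) ^ (α - 1)) :
    w 0 = 0 ∧ w 1 = 0 ∧
    ∀ φ : ℝ → ℝ, ContDiff ℝ (⊤ : ℕ∞) φ → tsupport φ ⊆ Set.Ioo (0:ℝ) 1 →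
      ∫ x in (0:ℝ)..1, rightFracInt (2 - α) w x * deriv (deriv φ) x
        = ∫ x in (0:ℝ)..1, (- f x) * φ x := by
  obtain ⟨hα1, hα2⟩ := hα
  have hfm : AEStronglyMeasurable f (volume.restrict (Set.Ioo (0:ℝ) 1)) := hf.1
  set g : ℝ → ℝ := (Set.Ioo (0:ℝ) 1).indicator (hfm.mk f) with hgdef
  have hgm : StronglyMeasurable g := hfm.stronglyMeasurable_mk.indicator measurableSet_Ioo
  have hfg : f =ᵐ[volume.restrict (Set.Ioo (0:ℝ) 1)] g :=
    hfm.ae_eq_mk.trans (indicator_ae_eq_restrict measurableSet_Ioo).symm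
  haveI hfin : IsFiniteMeasure (volume.restrict (Set.Ioo (0:ℝ) 1)) :=
    ⟨by rw [Measure.restrict_apply_univ]; exact measure_Ioo_lt_top⟩
  have hfi : Integrable f (volume.restrict (Set.Ioo (0:ℝ) 1)) :=
    memLp_one_iff_integrable.mp (hf.mono_exponent (by norm_num))
  have hgi : Integrable g volume := by
    rw [hgdef, integrable_indicator_iff measurableSet_Ioo]
    exact hfi.congr hfm.ae_eq_mk
  have hgs : ∀ t, t ∉ Set.Ioo (0:ℝ) 1 → g t = 0 := fun t ht => indicator_of_notMem ht _
  have hae : ∀ᵐ x : ℝ ∂volume, x ∈ Set.Ioo (0:ℝ) 1 → f x = g x :=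
    (ae_restrict_iff' measurableSet_Ioo).mp hfg
  have hne : ∀ᵐ x : ℝ ∂(volume : Measure ℝ), x ≠ 1 := by
    have h0 : (volume : Measure ℝ) {(1:ℝ)} = 0 := measure_singleton 1
    exact (measure_eq_zero_iff_ae_notMem.mp h0).mono fun x hx => by simpa using hx
  have ht1 : ∀ t ∈ Icc (0:ℝ) 1, rightFracInt α f t = rightFracInt α g t := by
    intro t ht
    unfold rightFracInt
    congr 1
    apply intervalIntegral.integral_congr_ae
    filter_upwards [hae, hne] with s hs hs1 hmem
    rw [Set.uIoc_of_le ht.2] at hmem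
    have hmem' : s ∈ Set.Ioo (0:ℝ) 1 :=
      ⟨lt_of_le_of_lt ht.1 hmem.1, lt_of_le_of_ne hmem.2 hs1⟩
    rw [hs hmem']
  refine ⟨?_, ?_, ?_⟩
  · rw [hw 0, sub_zero, Real.one_rpow]
    ring
  · have h1 : rightFracInt α f 1 = 0 := by
      rw [rightFracInt, intervalIntegral.integral_same, mul_zero]
    rw [hw 1, sub_self, Real.zero_rpow (by linarith : α - 1 ≠ 0), h1]
    ring
  · intro φ hφ hsupp
    have hw' : ∀ t ∈ Icc (0:ℝ) 1, w t = - rightFracInt α g t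
        + rightFracInt α g 0 * (1 - t) ^ (α - 1) := by
      intro t ht
      rw [hw t, ht1 t ht, ht1 0 ⟨le_refl 0, by norm_num⟩]
    rw [mainKey hα1 hα2 hgm hgi hgs φ hφ hsupp w hw']
    apply intervalIntegral.integral_congr_ae
    filter_upwards [hae, hne] with s hs hs1 hmem
    rw [Set.uIoc_of_le (by norm_num : (0:ℝ) ≤ 1)] at hmem
    have hmem' : s ∈ Set.Ioo (0:ℝ) 1 := ⟨hmem.1, lt_of_le_of_ne hmem.2 hs1⟩
    rw [hs hmem']
end

section
/- Let α ∈ (3/2,2) and x_i ∈ (0,1). The function φ_i(x) = (x_i−x)^{α−1}χ_{[0,x_i]}(x) − x_i^{α−1}(1−x)^{α−1} satisfies φ_i(0) = 0, φ_i(1) = 0, and ᴿD₁^{α−1}φ_i(x) = Γ(α)(χ_{[0,x_i]}(x) − x_i^{α−1}) for a.e. x ∈ (0,1); in particular ᴿD₁^{α−1}φ_i is piecewise constant. -/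
/-! The fractional integral of order `2 - α` of `(c - t)^(α-1)`, cut off at `c`, is a scaled
Beta integral over `(x, c)`: it equals `Γ(α) (c - x)` for `x < c` and vanishes for `x > c`, since
`B(2 - α, α) = Γ(2 - α) Γ(α)`. Taking `c = x_i` and `c = 1`, the fractional integral of `φ_i` is
piecewise affine away from `x_i`, and its negative derivative is `Γ(α) (χ_{[0,x_i]} - x_i^(α-1))`. -/

open MeasureTheory Set

/-- Right-sided Riemann-Liouville derivative of order `β ∈ (0,1)`. -/
noncomputable def rightRLDeriv (β : ℝ) (u : ℝ → ℝ) (x : ℝ) : ℝ :=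
  - deriv (rightFracInt (1 - β) u) x

section BetaKernel

variable {a b x y : ℝ}

theorem integral_rpow_mul_sub_rpow {L : ℝ} (ha : 0 < a) (hb : 0 < b) (hL : 0 < L) :
    ∫ u in (0:ℝ)..L, u ^ (a - 1) * (L - u) ^ (b - 1)
      = Real.Gamma a * Real.Gamma b / Real.Gamma (a + b) * L ^ (a + b - 1) := by
  have hΓ : Complex.Gamma (a + b) ≠ 0 := by
    rw [← Complex.ofReal_add, Complex.Gamma_ofReal]
    exact_mod_cast (Real.Gamma_pos_of_pos (add_pos ha hb)).ne'
  apply Complex.ofReal_injective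
  rw [← intervalIntegral.integral_ofReal]
  have hcast : ∫ u in (0:ℝ)..L, ((u ^ (a - 1) * (L - u) ^ (b - 1) : ℝ) : ℂ)
      = ∫ u in (0:ℝ)..L, (u : ℂ) ^ ((a : ℂ) - 1) * ((L : ℂ) - u) ^ ((b : ℂ) - 1) := by
    refine intervalIntegral.integral_congr fun u hu => ?_
    rw [uIcc_of_le hL.le] at hu
    push_cast [Complex.ofReal_cpow hu.1, Complex.ofReal_cpow (sub_nonneg.2 hu.2)]
    rfl
  rw [hcast, Complex.betaIntegral_scaled _ _ hL]
  have hβ := Complex.Gamma_mul_Gamma_eq_betaIntegral (s := a) (t := b) (by simpa) (by simpa)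
  push_cast [← Complex.Gamma_ofReal, Complex.ofReal_cpow hL.le]
  rw [hβ, mul_div_cancel_left₀ _ hΓ, mul_comm]

theorem integral_sub_rpow_mul_sub_rpow (ha : 0 < a) (hb : 0 < b) (hxy : x < y) :
    ∫ t in x..y, (t - x) ^ (a - 1) * (y - t) ^ (b - 1)
      = Real.Gamma a * Real.Gamma b / Real.Gamma (a + b) * (y - x) ^ (a + b - 1) := by
  have := intervalIntegral.integral_comp_sub_right
    (fun u => u ^ (a - 1) * ((y - x) - u) ^ (b - 1)) (a := x) (b := y) x
  simp only [sub_sub_sub_cancel_right, sub_self] at this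
  rw [this, integral_rpow_mul_sub_rpow ha hb (sub_pos.2 hxy)]

/-- The integral is positive, so the integrand cannot be non-integrable. -/
theorem intervalIntegrable_sub_rpow_mul_sub_rpow (ha : 0 < a) (hb : 0 < b) (hxy : x < y) :
    IntervalIntegrable (fun t => (t - x) ^ (a - 1) * (y - t) ^ (b - 1)) volume x y := by
  refine intervalIntegral.intervalIntegrable_of_integral_ne_zero (ne_of_gt ?_)
  rw [integral_sub_rpow_mul_sub_rpow ha hb hxy]
  have := Real.Gamma_pos_of_pos ha
  have := Real.Gamma_pos_of_pos hb
  have := Real.Gamma_pos_of_pos (add_pos ha hb)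
  have := Real.rpow_pos_of_pos (sub_pos.2 hxy) (a + b - 1)
  positivity

end BetaKernel

noncomputable def truncRpow (c p t : ℝ) : ℝ := if t ≤ c then (c - t) ^ p else 0

section TruncRpow

variable {c p t : ℝ}

theorem truncRpow_of_le (h : t ≤ c) : truncRpow c p t = (c - t) ^ p := if_pos h

theorem truncRpow_of_lt (h : c < t) : truncRpow c p t = 0 := if_neg h.not_ge

theorem hasDerivAt_truncRpow (h : t ≠ c) :
    HasDerivAt (truncRpow c p) (if t ≤ c then -(p * (c - t) ^ (p - 1)) else 0) t := by
  rcases h.lt_or_gt with hlt | hlt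
  · have hpow : HasDerivAt (fun s => (c - s) ^ p) (-1 * p * (c - t) ^ (p - 1)) t :=
      ((hasDerivAt_id t).const_sub c).rpow_const (Or.inl (sub_pos.2 hlt).ne')
    rw [if_pos hlt.le, ← neg_one_mul, ← mul_assoc]
    exact hpow.congr_of_eventuallyEq
      (Filter.eventually_of_mem (Iio_mem_nhds hlt) fun s hs => truncRpow_of_le (le_of_lt hs))
  · rw [if_neg hlt.not_ge]
    exact (hasDerivAt_const t 0).congr_of_eventuallyEq
      (Filter.eventually_of_mem (Ioi_mem_nhds hlt) fun s hs => truncRpow_of_lt hs)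

end TruncRpow

section RightFracInt

variable {γ δ c x : ℝ}

theorem sub_rpow_mul_truncRpow_eqOn_zero {a p : ℝ} (hca : c ≤ a) (hc : c ≤ 1) :
    EqOn (fun t => (t - x) ^ (γ - 1) * truncRpow c p t) 0 (uIoc a 1) := fun t ht => by
  simp only [truncRpow_of_lt ((le_min hca hc).trans_lt ht.1), mul_zero, Pi.zero_apply]

theorem intervalIntegrable_sub_rpow_mul_truncRpow (hγ : 0 < γ) (hδ : 0 < δ) (hc : c ≤ 1) :
    IntervalIntegrable (fun t => (t - x) ^ (γ - 1) * truncRpow c (δ - 1) t) volume x 1 := by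
  rcases lt_or_ge x c with hxc | hcx
  · refine IntervalIntegrable.trans (b := c) ?_ ?_
    · refine (intervalIntegrable_sub_rpow_mul_sub_rpow hγ hδ hxc).congr fun t ht => ?_
      rw [uIoc_of_le hxc.le] at ht
      simp only [truncRpow_of_le ht.2]
    · exact IntervalIntegrable.zero.congr (sub_rpow_mul_truncRpow_eqOn_zero le_rfl hc).symm
  · exact IntervalIntegrable.zero.congr (sub_rpow_mul_truncRpow_eqOn_zero hcx hc).symm

theorem integral_sub_rpow_mul_truncRpow (hγ : 0 < γ) (hδ : 0 < δ) (hc : c ≤ 1) (hxc : x ≠ c) :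
    ∫ t in x..1, (t - x) ^ (γ - 1) * truncRpow c (δ - 1) t
      = Real.Gamma γ * Real.Gamma δ / Real.Gamma (γ + δ) * truncRpow c (γ + δ - 1) x := by
  have hzero : ∀ a, c ≤ a → ∫ t in a..1, (t - x) ^ (γ - 1) * truncRpow c (δ - 1) t = 0 :=
    fun a hca => intervalIntegral.integral_zero_ae <|
      ae_of_all _ fun _ ht => sub_rpow_mul_truncRpow_eqOn_zero hca hc ht
  rcases hxc.lt_or_gt with hxc | hcx
  · have hint := intervalIntegrable_sub_rpow_mul_truncRpow (x := x) hγ hδ hc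
    have hcmem : c ∈ uIcc x 1 := mem_uIcc_of_le hxc.le hc
    rw [← intervalIntegral.integral_add_adjacent_intervals (b := c)
      (hint.mono_set (uIcc_subset_uIcc left_mem_uIcc hcmem))
      (hint.mono_set (uIcc_subset_uIcc hcmem right_mem_uIcc)), hzero c le_rfl, add_zero,
      truncRpow_of_le hxc.le, ← integral_sub_rpow_mul_sub_rpow hγ hδ hxc]
    refine intervalIntegral.integral_congr fun t ht => ?_
    rw [uIcc_of_le hxc.le] at ht
    simp only [truncRpow_of_le ht.2]
  · rw [hzero x hcx.le, truncRpow_of_lt hcx, mul_zero]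

theorem rightFracInt_truncRpow (hγ : 0 < γ) (hδ : 0 < δ) (hc : c ≤ 1) (hxc : x ≠ c) :
    rightFracInt γ (truncRpow c (δ - 1)) x
      = Real.Gamma δ / Real.Gamma (γ + δ) * truncRpow c (γ + δ - 1) x := by
  have := (Real.Gamma_pos_of_pos hγ).ne'
  rw [rightFracInt, integral_sub_rpow_mul_truncRpow hγ hδ hc hxc]
  field_simp

theorem rightFracInt_one_sub_rpow (hγ : 0 < γ) (hδ : 0 < δ) (hx : x < 1) :
    rightFracInt γ (fun t => (1 - t) ^ (δ - 1)) x
      = Real.Gamma δ / Real.Gamma (γ + δ) * (1 - x) ^ (γ + δ - 1) := by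
  have := (Real.Gamma_pos_of_pos hγ).ne'
  rw [rightFracInt, integral_sub_rpow_mul_sub_rpow hγ hδ hx]
  field_simp

theorem rightFracInt_sub_const_mul {f g : ℝ → ℝ}
    (hf : IntervalIntegrable (fun t => (t - x) ^ (γ - 1) * f t) volume x 1)
    (hg : IntervalIntegrable (fun t => (t - x) ^ (γ - 1) * g t) volume x 1) (k : ℝ) :
    rightFracInt γ (fun t => f t - k * g t) x = rightFracInt γ f x - k * rightFracInt γ g x := by
  simp only [rightFracInt, mul_sub, mul_left_comm _ k]
  rw [intervalIntegral.integral_sub hf (hg.const_mul k), intervalIntegral.integral_const_mul]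
  ring

theorem rightFracInt_truncRpow_sub_const_mul_one_sub_rpow (hγ : 0 < γ) (hδ : 0 < δ)
    (hx : x < 1) (hc : c ≤ 1) (hxc : x ≠ c) (k : ℝ) :
    rightFracInt γ (fun t => truncRpow c (δ - 1) t - k * (1 - t) ^ (δ - 1)) x
      = Real.Gamma δ / Real.Gamma (γ + δ)
        * (truncRpow c (γ + δ - 1) x - k * (1 - x) ^ (γ + δ - 1)) := by
  rw [rightFracInt_sub_const_mul (intervalIntegrable_sub_rpow_mul_truncRpow hγ hδ hc)
    (intervalIntegrable_sub_rpow_mul_sub_rpow hγ hδ hx), rightFracInt_truncRpow hγ hδ hc hxc,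
    rightFracInt_one_sub_rpow hγ hδ hx]
  ring

end RightFracInt

/-- For `α ∈ (3/2,2)` and `x_i ∈ (0,1)`, the test basis function
`φ_i(x) = (x_i-x)^{α-1}χ_{[0,x_i]}(x) - x_i^{α-1}(1-x)^{α-1}` vanishes at `0` and `1`,
and `ᴿD₁^{α-1}φ_i = Γ(α)(χ_{[0,x_i]} - x_i^{α-1})` a.e. on `(0,1)`, a piecewise
constant function. -/
theorem testBasis_RL (α : ℝ) (hα : α ∈ Set.Ioo (3/2 : ℝ) 2)
    (xi : ℝ) (hxi : xi ∈ Set.Ioo (0:ℝ) 1)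
    (φ : ℝ → ℝ)
    (hφ : ∀ x, φ x = (if x ≤ xi then (xi - x) ^ (α - 1) else 0)
        - xi ^ (α - 1) * (1 - x) ^ (α - 1)) :
    φ 0 = 0 ∧ φ 1 = 0 ∧
    ∀ᵐ x ∂(volume.restrict (Set.Ioo (0:ℝ) 1)),
      rightRLDeriv (α - 1) φ x
        = Real.Gamma α * ((if x ≤ xi then 1 else 0) - xi ^ (α - 1)) := by
  obtain ⟨hα1, hα2⟩ := hα
  obtain ⟨hxi0, hxi1⟩ := hxi
  have hφ' : φ = fun t => truncRpow xi (α - 1) t - xi ^ (α - 1) * (1 - t) ^ (α - 1) := funext hφ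
  refine ⟨by simp [hφ', truncRpow_of_le hxi0.le], ?_, ?_⟩
  · simp [hφ', truncRpow_of_lt hxi1, Real.zero_rpow (by linarith : α - 1 ≠ 0)]
  filter_upwards [ae_restrict_mem measurableSet_Ioo, ae_restrict_of_ae (Measure.ae_ne volume xi)]
    with x hx hxxi
  have hclosed : rightFracInt (2 - α) φ =ᶠ[nhds x]
      fun y => Real.Gamma α * (truncRpow xi 1 y - xi ^ (α - 1) * (1 - y)) := by
    filter_upwards [(isOpen_Iio.inter isOpen_compl_singleton).mem_nhds ⟨hx.2, hxxi⟩]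
      with y ⟨hy1, hyxi⟩
    rw [hφ', rightFracInt_truncRpow_sub_const_mul_one_sub_rpow (by linarith) (by linarith) hy1
      hxi1.le hyxi]
    norm_num
  have hderiv : HasDerivAt
      (fun y => Real.Gamma α * (truncRpow xi 1 y - xi ^ (α - 1) * (1 - y))) _ x :=
    ((hasDerivAt_truncRpow (p := 1) hxxi).sub
    (((hasDerivAt_id x).const_sub 1).const_mul (xi ^ (α - 1)))).const_mul (Real.Gamma α)
  rw [rightRLDeriv, show 1 - (α - 1) = 2 - α by ring, hclosed.deriv_eq, hderiv.deriv]
  simp only [sub_self, Real.rpow_zero, mul_one]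
  split_ifs <;> ring
end
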